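/- arXiv:1606.09145 — 6 statements merged into one kernel-verified Lean document; each statement's English description precedes it below -/
import Mathlib

section
/- (Fischer-type decomposition for bidegree (2,2)) Let $0 \le \ell \le n$ with $n \ge 2$, and let $Q(z,\bar z)$ be any real-valued bihomogeneous polynomial of bidegree $(2,2)$ on $\mathbb{C}^n$. Then there exist unique real-valued bihomogeneous polynomials $h^{(2)}(z,\bar z)$ of bidegree $(1,1)$ and $h^{(4)}(z,\bar z)$ of bidegree $(2,2)$ with $\triangle_\ell h^{(4)} = 0$ such that $Q(z,\bar z) = h^{(2)}(z,\bar z)\,|z|_\ell^2 + h^{(4)}(z,\bar z)$. -/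
open scoped BigOperators ComplexConjugate

noncomputable section

/-- The sign `ε_j`: `-1` for the first `ℓ` indices, `+1` afterwards. -/
def eps (n ℓ : ℕ) (j : Fin n) : ℂ := if (j : ℕ) < ℓ then -1 else 1

/-- The matrix `g_0^{β̄ α}`: diagonal with entries `-1` (first `ℓ`) and `+1`. -/
def g0 (n ℓ : ℕ) (β α : Fin n) : ℂ := if β = α then eps n ℓ β else 0

/-- The polarized bidegree (2,2) polynomial
`s(z,w) = ∑ s_{α β̄ γ δ̄} z_α w_β z_γ w_δ`, where `w` plays the role of `z̄`. -/
def quartic {n : ℕ} (s : Fin n → Fin n → Fin n → Fin n → ℂ) :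
    (Fin n → ℂ) → (Fin n → ℂ) → ℂ :=
  fun z w => ∑ α : Fin n, ∑ β : Fin n, ∑ γ : Fin n, ∑ δ : Fin n,
    s α β γ δ * z α * w β * z γ * w δ

/-- Holomorphic partial derivative `∂/∂z_j` of a polarized function `f(z,w)`. -/
def Dz {n : ℕ} (f : (Fin n → ℂ) → (Fin n → ℂ) → ℂ) (j : Fin n) :
    (Fin n → ℂ) → (Fin n → ℂ) → ℂ :=
  fun z w => fderiv ℂ (fun z' => f z' w) z (Pi.single j 1)

/-- Antiholomorphic partial derivative `∂/∂z̄_j`, acting on the second (polarized) slot. -/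
def Dw {n : ℕ} (f : (Fin n → ℂ) → (Fin n → ℂ) → ℂ) (j : Fin n) :
    (Fin n → ℂ) → (Fin n → ℂ) → ℂ :=
  fun z w => fderiv ℂ (fun w' => f z w') w (Pi.single j 1)

/-- The signed Laplacian `△_ℓ = -∑_{j≤ℓ} ∂²/∂z_j∂z̄_j + ∑_{j>ℓ} ∂²/∂z_j∂z̄_j`. -/
def lapL {n : ℕ} (ℓ : ℕ) (f : (Fin n → ℂ) → (Fin n → ℂ) → ℂ) :
    (Fin n → ℂ) → (Fin n → ℂ) → ℂ :=
  fun z w => ∑ j : Fin n, eps n ℓ j * Dw (Dz f j) j z w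

/-- The signed norm `|z|_ℓ² = -∑_{j≤ℓ}|z_j|² + ∑_{j>ℓ}|z_j|²` (as a complex number). -/
def nSq (n ℓ : ℕ) (z : Fin n → ℂ) : ℂ := ∑ j : Fin n, eps n ℓ j * z j * conj (z j)

/-- A bidegree (1,1) polynomial `∑_{α,β} a_{α β̄} z_α z̄_β`. -/
def herm {n : ℕ} (a : Fin n → Fin n → ℂ) (z : Fin n → ℂ) : ℂ :=
  ∑ α : Fin n, ∑ β : Fin n, a α β * z α * conj (z β)

/-! Expanding `△_ℓ` shows that `△_ℓ` of the quartic with coefficient tensor `s` is the (1,1)-form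
with coefficient matrix `lapCoeff ℓ s`, a signed contraction of `s`. On the quartics
`h⁽²⁾ |z|_ℓ²`, i.e. `s = mulG0 ℓ a`, this contraction is `a ↦ tr_ℓ(a) g₀ + (n + 2) a`, which is
invertible with explicit inverse `normPart ℓ`; hence `h⁽²⁾ = normPart ℓ (lapCoeff ℓ q)` and
`h⁽⁴⁾ = Q - h⁽²⁾ |z|_ℓ²`.

For uniqueness, a decomposition only pins down the polynomials on the real slice `w = z̄`.
This suffices: a polynomial `F(z, w)` vanishing on `w = z̄` vanishes identically, since along the
line `t ↦ (P + t Q, P̄ + t Q̄)` it is a polynomial in `t` vanishing on `ℝ`, and every `(z, w)` is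
the point `t = i` of such a line. -/

open Finset Polynomial

section Polarization

variable {ι : Type*}

def IsPolynomialOnLines (F : (ι → ℂ) → (ι → ℂ) → ℂ) : Prop :=
  ∀ z v w y : ι → ℂ, ∃ p : ℂ[X], ∀ t : ℂ, F (z + t • v) (w + t • y) = p.eval t

theorem IsPolynomialOnLines.eq_zero_of_conj {F : (ι → ℂ) → (ι → ℂ) → ℂ}
    (hF : IsPolynomialOnLines F) (h : ∀ z : ι → ℂ, F z (fun j => conj (z j)) = 0)
    (z w : ι → ℂ) : F z w = 0 := by
  set P : ι → ℂ := fun j => (z j + conj (w j)) / 2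
  set Q : ι → ℂ := fun j => (z j - conj (w j)) / (2 * Complex.I)
  obtain ⟨p, hp⟩ := hF P Q (fun j => conj (P j)) (fun j => conj (Q j))
  have hroot : ∀ t : ℝ, p.IsRoot t := fun t => by
    rw [IsRoot, ← hp, ← h (P + (t : ℂ) • Q)]
    congr 1
    ext j
    simp
  have hp0 : p = 0 := p.eq_zero_of_infinite_isRoot <|
    (Set.infinite_range_of_injective Complex.ofReal_injective).mono
      (Set.range_subset_iff.2 hroot)
  have hz : P + Complex.I • Q = z := by
    ext j; simp [P, Q]; field_simp; ring
  have hw : (fun j => conj (P j)) + Complex.I • (fun j => conj (Q j)) = w := by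
    ext j; simp [P, Q, map_ofNat]; field_simp; ring
  rw [← hz, ← hw, hp, hp0, eval_zero]

end Polarization

section Forms

variable {n : ℕ}

def bilin (a : Fin n → Fin n → ℂ) (z w : Fin n → ℂ) : ℂ :=
  ∑ α, ∑ β, a α β * z α * w β

lemma bilin_single (a : Fin n → Fin n → ℂ) (α β : Fin n) :
    bilin a (Pi.single α 1) (Pi.single β 1) = a α β := by
  simp [bilin, Pi.single_apply]

lemma quartic_sub (s t : Fin n → Fin n → Fin n → Fin n → ℂ) (z w : Fin n → ℂ) :
    quartic (s - t) z w = quartic s z w - quartic t z w := by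
  simp only [quartic, Pi.sub_apply, sub_mul, sum_sub_distrib]

lemma quartic_add (s t : Fin n → Fin n → Fin n → Fin n → ℂ) (z w : Fin n → ℂ) :
    quartic (s + t) z w = quartic s z w + quartic t z w := by
  simp only [quartic, Pi.add_apply, add_mul, sum_add_distrib]

lemma bilin_isPolynomialOnLines (a : Fin n → Fin n → ℂ) : IsPolynomialOnLines (bilin a) := by
  intro z v w y
  refine ⟨∑ α, ∑ β, C (a α β) * (C (z α) + X * C (v α)) * (C (w β) + X * C (y β)),
    fun t => ?_⟩
  simp only [bilin, eval_finsetSum, eval_mul, eval_add, eval_C, eval_X, Pi.add_apply,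
    Pi.smul_apply, smul_eq_mul]

lemma quartic_isPolynomialOnLines (s : Fin n → Fin n → Fin n → Fin n → ℂ) :
    IsPolynomialOnLines (quartic s) := by
  intro z v w y
  refine ⟨∑ α, ∑ β, ∑ γ, ∑ δ, C (s α β γ δ) * (C (z α) + X * C (v α)) *
    (C (w β) + X * C (y β)) * (C (z γ) + X * C (v γ)) * (C (w δ) + X * C (y δ)),
    fun t => ?_⟩
  simp only [quartic, eval_finsetSum, eval_mul, eval_add, eval_C, eval_X, Pi.add_apply,
    Pi.smul_apply, smul_eq_mul]

lemma eq_zero_of_bilin_conj {a : Fin n → Fin n → ℂ}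
    (h : ∀ z : Fin n → ℂ, bilin a z (fun j => conj (z j)) = 0) : a = 0 := by
  ext α β
  rw [← bilin_single a α β, (bilin_isPolynomialOnLines a).eq_zero_of_conj h]
  rfl

lemma fderiv_bilin_diag (a : Fin n → Fin n → ℂ) (z : Fin n → ℂ) (j : Fin n) :
    fderiv ℂ (fun z' => bilin a z' z') z (Pi.single j 1)
      = ∑ γ, a j γ * z γ + ∑ α, a α j * z α := by
  have hproj (α : Fin n) : HasFDerivAt (fun z' : Fin n → ℂ => z' α)
      (ContinuousLinearMap.proj α : (Fin n → ℂ) →L[ℂ] ℂ) z :=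
    (ContinuousLinearMap.proj (R := ℂ) (φ := fun _ : Fin n => ℂ) α).hasFDerivAt
  have H : HasFDerivAt (fun z' => bilin a z' z')
      (∑ α, ∑ β, ((a α β * z α) • ContinuousLinearMap.proj β
        + z β • a α β • ContinuousLinearMap.proj α)) z :=
    HasFDerivAt.fun_sum fun α _ => HasFDerivAt.fun_sum fun β _ =>
      ((hproj α).const_mul (a α β)).mul (hproj β)
  rw [H.fderiv]
  simp [Pi.single_apply, sum_add_distrib, add_comm, mul_comm]

end Forms

section Laplacian

variable {n : ℕ}

lemma Dz_quartic (s : Fin n → Fin n → Fin n → Fin n → ℂ) (j : Fin n) (z w : Fin n → ℂ) :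
    Dz (quartic s) j z w
      = bilin (fun β δ => ∑ γ, s j β γ δ * z γ + ∑ α, s α β j δ * z α) w w := by
  have hquad : (fun z' => quartic s z' w)
      = fun z' => bilin (fun α γ => bilin (fun β δ => s α β γ δ) w w) z' z' := by
    ext z'
    simp only [quartic, bilin, sum_mul]
    refine sum_congr rfl fun α _ => ?_
    rw [sum_comm]
    exact sum_congr rfl fun γ _ => sum_congr rfl fun β _ => sum_congr rfl fun δ _ => by ring
  rw [Dz, hquad, fderiv_bilin_diag]
  simp only [bilin, sum_mul, add_mul, sum_add_distrib]
  refine congrArg₂ (· + ·) ?_ ?_ <;>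
  · rw [sum_comm]
    refine sum_congr rfl fun _ _ => ?_
    rw [sum_comm]
    exact sum_congr rfl fun _ _ => sum_congr rfl fun _ _ => by ring

lemma Dw_Dz_quartic (s : Fin n → Fin n → Fin n → Fin n → ℂ) (j : Fin n) (z w : Fin n → ℂ) :
    Dw (Dz (quartic s) j) j z w
      = bilin (fun α β => (s j j α β + s α j j β) + (s j β α j + s α β j j)) z w := by
  rw [Dw, funext (Dz_quartic s j z), fderiv_bilin_diag]
  simp only [bilin, sum_mul, add_mul, sum_add_distrib]
  congr 1 <;> congr 1 <;> exact sum_comm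

variable (ℓ : ℕ)

def lapCoeff (s : Fin n → Fin n → Fin n → Fin n → ℂ) (α β : Fin n) : ℂ :=
  ∑ j, eps n ℓ j * ((s j j α β + s α j j β) + (s j β α j + s α β j j))

lemma lapL_quartic (s : Fin n → Fin n → Fin n → Fin n → ℂ) (z w : Fin n → ℂ) :
    lapL ℓ (quartic s) z w = bilin (lapCoeff ℓ s) z w := by
  simp only [lapL, Dw_Dz_quartic, bilin, lapCoeff, mul_sum, sum_mul]
  rw [sum_comm]
  refine sum_congr rfl fun _ _ => ?_
  rw [sum_comm]
  exact sum_congr rfl fun _ _ => sum_congr rfl fun _ _ => by ring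

lemma lapCoeff_add (s t : Fin n → Fin n → Fin n → Fin n → ℂ) :
    lapCoeff ℓ (s + t) = lapCoeff ℓ s + lapCoeff ℓ t := by
  ext α β
  simp only [lapCoeff, Pi.add_apply, ← sum_add_distrib]
  exact sum_congr rfl fun _ _ => by ring

lemma lapCoeff_sub (s t : Fin n → Fin n → Fin n → Fin n → ℂ) :
    lapCoeff ℓ (s - t) = lapCoeff ℓ s - lapCoeff ℓ t := by
  ext α β
  simp only [lapCoeff, Pi.sub_apply, ← sum_sub_distrib]
  exact sum_congr rfl fun _ _ => by ring

lemma lapCoeff_eq_zero_of_lapL_conj {s : Fin n → Fin n → Fin n → Fin n → ℂ}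
    (h : ∀ z : Fin n → ℂ, lapL ℓ (quartic s) z (fun j => conj (z j)) = 0) :
    lapCoeff ℓ s = 0 :=
  eq_zero_of_bilin_conj fun z => by rw [← lapL_quartic, h]

lemma lapCoeff_eq_of_quartic_conj_eq {s t : Fin n → Fin n → Fin n → Fin n → ℂ}
    (h : ∀ z : Fin n → ℂ,
      quartic s z (fun j => conj (z j)) = quartic t z (fun j => conj (z j))) :
    lapCoeff ℓ s = lapCoeff ℓ t := by
  have hzero : quartic (s - t) = fun _ _ => 0 := funext₂ <|
    (quartic_isPolynomialOnLines (s - t)).eq_zero_of_conj fun z => by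
      rw [quartic_sub, h, sub_self]
  rw [← sub_eq_zero, ← lapCoeff_sub]
  refine lapCoeff_eq_zero_of_lapL_conj ℓ fun z => ?_
  rw [hzero]
  simp [lapL, Dz, Dw]

end Laplacian

section NormPart

variable {n : ℕ} (ℓ : ℕ)

lemma eps_mul_self (j : Fin n) : eps n ℓ j * eps n ℓ j = 1 := by
  unfold eps; split <;> norm_num

lemma eps_mul_mul_eps (j : Fin n) (x : ℂ) : eps n ℓ j * (x * eps n ℓ j) = x := by
  rw [mul_left_comm, eps_mul_self, mul_one]

lemma conj_eps (j : Fin n) : conj (eps n ℓ j) = eps n ℓ j := by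
  unfold eps; split <;> simp

lemma conj_g0 (α β : Fin n) : conj (g0 n ℓ α β) = g0 n ℓ β α := by
  unfold g0
  by_cases h : α = β
  · subst h; simp [conj_eps]
  · simp [h, Ne.symm h]

def signedTrace (a : Fin n → Fin n → ℂ) : ℂ := ∑ j, eps n ℓ j * a j j

@[simp] lemma signedTrace_add (a b : Fin n → Fin n → ℂ) :
    signedTrace ℓ (a + b) = signedTrace ℓ a + signedTrace ℓ b := by
  simp [signedTrace, mul_add, sum_add_distrib]

@[simp] lemma signedTrace_sub (a b : Fin n → Fin n → ℂ) :
    signedTrace ℓ (a - b) = signedTrace ℓ a - signedTrace ℓ b := by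
  simp [signedTrace, mul_sub, sum_sub_distrib]

@[simp] lemma signedTrace_smul (c : ℂ) (a : Fin n → Fin n → ℂ) :
    signedTrace ℓ (c • a) = c * signedTrace ℓ a := by
  simp [signedTrace, mul_sum, mul_left_comm]

@[simp] lemma signedTrace_g0 : signedTrace ℓ (g0 n ℓ) = n := by
  simp [signedTrace, g0, eps_mul_self]

def mulG0 (a : Fin n → Fin n → ℂ) : Fin n → Fin n → Fin n → Fin n → ℂ :=
  fun α β γ δ => a α β * g0 n ℓ γ δ

lemma quartic_mulG0_conj (a : Fin n → Fin n → ℂ) (z : Fin n → ℂ) :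
    quartic (mulG0 ℓ a) z (fun j => conj (z j)) = herm a z * nSq n ℓ z := by
  simp only [quartic, mulG0, herm, nSq, sum_mul]
  refine sum_congr rfl fun α _ => sum_congr rfl fun β _ => ?_
  rw [mul_sum]
  refine sum_congr rfl fun γ _ => ?_
  simp [g0, mul_ite, ite_mul]
  ring

lemma lapCoeff_mulG0 (a : Fin n → Fin n → ℂ) :
    lapCoeff ℓ (mulG0 ℓ a) = signedTrace ℓ a • g0 n ℓ + ((n : ℂ) + 2) • a := by
  ext α β
  simp [lapCoeff, mulG0, signedTrace, g0, mul_add, sum_add_distrib, eps_mul_mul_eps]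
  split_ifs <;> simp [sum_mul, mul_assoc] <;> ring

lemma natCast_add_two_ne_zero (n : ℕ) : (n : ℂ) + 2 ≠ 0 := by
  exact_mod_cast (n + 1).succ_ne_zero

def normPart (T : Fin n → Fin n → ℂ) : Fin n → Fin n → ℂ :=
  ((n : ℂ) + 2)⁻¹ • (T - ((2 * (n : ℂ) + 2)⁻¹ * signedTrace ℓ T) • g0 n ℓ)

lemma lapCoeff_mulG0_normPart (T : Fin n → Fin n → ℂ) :
    lapCoeff ℓ (mulG0 ℓ (normPart ℓ T)) = T := by
  ext α β
  simp [lapCoeff_mulG0, normPart]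
  field_simp [natCast_add_two_ne_zero n]
  ring

lemma normPart_lapCoeff_mulG0 (a : Fin n → Fin n → ℂ) :
    normPart ℓ (lapCoeff ℓ (mulG0 ℓ a)) = a := by
  ext α β
  simp [lapCoeff_mulG0, normPart]
  field_simp [natCast_add_two_ne_zero n]
  ring

end NormPart

section Reality

variable {n : ℕ} (ℓ : ℕ)

lemma conj_lapCoeff {s : Fin n → Fin n → Fin n → Fin n → ℂ}
    (hs : ∀ α β γ δ, conj (s α β γ δ) = s β α δ γ) (α β : Fin n) :
    conj (lapCoeff ℓ s α β) = lapCoeff ℓ s β α := by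
  simp only [lapCoeff, map_sum, map_mul, map_add, conj_eps, hs]
  exact sum_congr rfl fun _ _ => by ring

lemma conj_signedTrace {a : Fin n → Fin n → ℂ} (ha : ∀ α β, conj (a α β) = a β α) :
    conj (signedTrace ℓ a) = signedTrace ℓ a := by
  simp [signedTrace, conj_eps, ha]

lemma conj_normPart {T : Fin n → Fin n → ℂ} (hT : ∀ α β, conj (T α β) = T β α)
    (α β : Fin n) : conj (normPart ℓ T α β) = normPart ℓ T β α := by
  simp [normPart, conj_signedTrace ℓ hT, conj_g0, hT, map_ofNat]

end Reality

theorem stmt3_general {n ℓ : ℕ}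
    (q : Fin n → Fin n → Fin n → Fin n → ℂ)
    (hqreal : ∀ α β γ δ, conj (q α β γ δ) = q β α δ γ) :
    ∃ (a : Fin n → Fin n → ℂ) (b : Fin n → Fin n → Fin n → Fin n → ℂ),
      (∀ α β, conj (a α β) = a β α) ∧
      (∀ α β γ δ, conj (b α β γ δ) = b β α δ γ) ∧
      (∀ z : Fin n → ℂ, lapL ℓ (quartic b) z (fun j => conj (z j)) = 0) ∧
      (∀ z : Fin n → ℂ,
        quartic q z (fun j => conj (z j))
          = herm a z * nSq n ℓ z + quartic b z (fun j => conj (z j))) ∧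
      (∀ (a' : Fin n → Fin n → ℂ) (b' : Fin n → Fin n → Fin n → Fin n → ℂ),
        (∀ α β, conj (a' α β) = a' β α) →
        (∀ α β γ δ, conj (b' α β γ δ) = b' β α δ γ) →
        (∀ z : Fin n → ℂ, lapL ℓ (quartic b') z (fun j => conj (z j)) = 0) →
        (∀ z : Fin n → ℂ,
          quartic q z (fun j => conj (z j))
            = herm a' z * nSq n ℓ z + quartic b' z (fun j => conj (z j))) →
        (∀ z : Fin n → ℂ, herm a z = herm a' z) ∧
        (∀ z : Fin n → ℂ,
          quartic b z (fun j => conj (z j)) = quartic b' z (fun j => conj (z j)))) := by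
  set a := normPart ℓ (lapCoeff ℓ q)
  have ha : ∀ α β, conj (a α β) = a β α := conj_normPart ℓ (conj_lapCoeff ℓ hqreal)
  have hdec : ∀ z : Fin n → ℂ, quartic q z (fun j => conj (z j))
      = herm a z * nSq n ℓ z + quartic (q - mulG0 ℓ a) z (fun j => conj (z j)) := fun z => by
    rw [quartic_sub, quartic_mulG0_conj]; ring
  refine ⟨a, q - mulG0 ℓ a, ha, fun α β γ δ => ?_, fun z => ?_, hdec,
    fun a' b' _ _ hb' hdec' => ?_⟩
  · simp [mulG0, hqreal, ha, conj_g0]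
  · rw [lapL_quartic, lapCoeff_sub, lapCoeff_mulG0_normPart, sub_self]
    simp [bilin]
  have hlap : lapCoeff ℓ q = lapCoeff ℓ (mulG0 ℓ a' + b') :=
    lapCoeff_eq_of_quartic_conj_eq ℓ fun z => by rw [quartic_add, quartic_mulG0_conj, hdec' z]
  rw [lapCoeff_add, lapCoeff_eq_zero_of_lapL_conj ℓ hb', add_zero] at hlap
  obtain rfl : a' = a := by rw [← normPart_lapCoeff_mulG0 ℓ a', ← hlap]
  exact ⟨fun _ => rfl, fun z => by linear_combination hdec' z - hdec z⟩

/-- Fischer-type decomposition for bidegree (2,2):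
every real-valued bidegree (2,2) polynomial `Q` decomposes as
`Q = h⁽²⁾ |z|_ℓ² + h⁽⁴⁾` with `h⁽²⁾` real of bidegree (1,1), `h⁽⁴⁾` real of bidegree
(2,2) and `△_ℓ h⁽⁴⁾ = 0`, uniquely at the level of polynomial functions. -/
theorem stmt3 {n ℓ : ℕ} (hn : 2 ≤ n) (hl : ℓ ≤ n)
    (q : Fin n → Fin n → Fin n → Fin n → ℂ)
    (hqreal : ∀ α β γ δ, conj (q α β γ δ) = q β α δ γ) :
    ∃ (a : Fin n → Fin n → ℂ) (b : Fin n → Fin n → Fin n → Fin n → ℂ),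
      (∀ α β, conj (a α β) = a β α) ∧
      (∀ α β γ δ, conj (b α β γ δ) = b β α δ γ) ∧
      (∀ z : Fin n → ℂ, lapL ℓ (quartic b) z (fun j => conj (z j)) = 0) ∧
      (∀ z : Fin n → ℂ,
        quartic q z (fun j => conj (z j))
          = herm a z * nSq n ℓ z + quartic b z (fun j => conj (z j))) ∧
      (∀ (a' : Fin n → Fin n → ℂ) (b' : Fin n → Fin n → Fin n → Fin n → ℂ),
        (∀ α β, conj (a' α β) = a' β α) →
        (∀ α β γ δ, conj (b' α β γ δ) = b' β α δ γ) →
        (∀ z : Fin n → ℂ, lapL ℓ (quartic b') z (fun j => conj (z j)) = 0) →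
        (∀ z : Fin n → ℂ,
          quartic q z (fun j => conj (z j))
            = herm a' z * nSq n ℓ z + quartic b' z (fun j => conj (z j))) →
        (∀ z : Fin n → ℂ, herm a z = herm a' z) ∧
        (∀ z : Fin n → ℂ,
          quartic b z (fun j => conj (z j)) = quartic b' z (fun j => conj (z j)))) :=
  stmt3_general q hqreal
end
end

section
/- Let $0 < \ell \le n/2$ and let $s(z,\bar z) = \sum s_{\alpha\bar\beta\gamma\bar\delta} z_\alpha\bar z_\beta z_\gamma \bar z_\delta$ be a real-valued bihomogeneous polynomial of bidegree $(2,2)$ satisfying the symmetry relations of a Chern-Moser-Weyl tensor and $\triangle_\ell s \equiv 0$. If $s(z,\bar z) = 0$ for all $z$ on the null cone $\mathcal{C}_\ell = \{|z|_\ell^2 = 0\}$, then $s \equiv 0$. -/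
open scoped BigOperators ComplexConjugate

noncomputable section

/-!
Write `s(z, z̄) = ∑ₜ s_t z^t` over multi-indices `t = (α, β, γ, δ)`, with `z^t = z_α z̄_β z_γ z̄_δ`.
The torus `z_j ↦ ω_j z_j`, `|ω_j| = 1`, preserves the null cone and acts on `z^t` with weight
`e_α + e_γ - e_β - e_δ`, so every weight component of `s` vanishes on the cone. These components
are tested at the points `z_j = √v_j` with `v > 0` and `∑ ε_j v_j = 0`, an open piece of the
hyperplane `ε^⊥` in the variables `v_j = |z_j|²`.

* If `{α, γ}` and `{β, δ}` are disjoint, the component is a multiple of `z^t` alone, so `s_t = 0`.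
* The component of weight `e_a - e_b` is `√(v_a v_b) ∑_c m_c s_{a b̄ c c̄} v_c` with multiplicities
  `m_c ≥ 1`; a linear form vanishing on an open piece of `ε^⊥` is a multiple of `ε`.
* What remains is a quadratic form in `v`; vanishing on an open piece of `ε^⊥`, it has the shape
  `ε ⊗ λ + λ ⊗ ε`.

Harmonicity says `△_ℓ s = 4 ∑ (∑_j ε_j s_{j j̄ γ δ̄}) z_γ z̄_δ = 0`, i.e. all signed traces of `s`
vanish, and these trace conditions force the factors of proportionality above to be zero.
-/

namespace ChernMoser

variable {n ℓ : ℕ}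

lemma fderiv_quadratic_apply_single {ι : Type*} [Fintype ι] [DecidableEq ι] (K : ι → ι → ℂ)
    (z : ι → ℂ) (j : ι) :
    fderiv ℂ (fun z : ι → ℂ => ∑ α, ∑ γ, K α γ * z α * z γ) z (Pi.single j 1) =
      ∑ α, (K α j + K j α) * z α := by
  have h : HasFDerivAt (fun z : ι → ℂ => ∑ α, ∑ γ, K α γ * z α * z γ)
      (∑ α, ∑ γ, K α γ • (z α • ContinuousLinearMap.proj γ + z γ • ContinuousLinearMap.proj α)) z :=
    HasFDerivAt.fun_sum fun α _ => HasFDerivAt.fun_sum fun γ _ => by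
      simpa only [mul_assoc] using
        ((hasFDerivAt_apply (𝕜 := ℂ) α z).fun_mul (hasFDerivAt_apply (𝕜 := ℂ) γ z)).const_mul _
  rw [h.fderiv]
  simp [Pi.single_apply, Finset.sum_add_distrib, add_mul]

lemma herm_single_add_single (T : Fin n → Fin n → ℂ) (γ δ : Fin n) (a b : ℂ) :
    herm T (Pi.single γ a + Pi.single δ b) =
      T γ γ * a * conj a + T γ δ * a * conj b + T δ γ * b * conj a + T δ δ * b * conj b := by
  simp [herm, Pi.single_apply, add_mul, mul_add, Finset.sum_add_distrib, apply_ite (starRingEnd ℂ)]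
  ring

lemma eq_zero_of_forall_herm_eq_zero {T : Fin n → Fin n → ℂ} (h : ∀ z, herm T z = 0)
    (γ δ : Fin n) : T γ δ = 0 := by
  have h10 := h (Pi.single γ 1 + Pi.single δ 0)
  have h01 := h (Pi.single γ 0 + Pi.single δ 1)
  have h11 := h (Pi.single γ 1 + Pi.single δ 1)
  have h1I := h (Pi.single γ 1 + Pi.single δ Complex.I)
  simp only [herm_single_add_single, map_one, map_zero, Complex.conj_I, mul_neg] at h10 h01 h11 h1I
  linear_combination (1 / 2 : ℂ) * (h11 - h10 - h01) + (Complex.I / 2) * (h1I - h10 - h01) +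
    (T γ δ - T δ γ + T δ δ * Complex.I) / 2 * Complex.I_sq

def signedTrace (ℓ : ℕ) (s : Fin n → Fin n → Fin n → Fin n → ℂ) (γ δ : Fin n) : ℂ :=
  ∑ j, eps n ℓ j * s j j γ δ

lemma Dz_quartic (s : Fin n → Fin n → Fin n → Fin n → ℂ) (j : Fin n) (z w : Fin n → ℂ) :
    Dz (quartic s) j z w = ∑ β, ∑ δ, (∑ α, (s α β j δ + s j β α δ) * z α) * w β * w δ := by
  have h : (fun z' => quartic s z' w) =
      fun z' => ∑ α, ∑ γ, (∑ β, ∑ δ, s α β γ δ * w β * w δ) * z' α * z' γ := by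
    funext z'
    simp only [quartic, Finset.sum_mul]
    refine Finset.sum_congr rfl fun α _ => Finset.sum_comm.trans ?_
    exact Finset.sum_congr rfl fun γ _ => Finset.sum_congr rfl fun β _ =>
      Finset.sum_congr rfl fun δ _ => by ring
  rw [Dz, h, fderiv_quadratic_apply_single]
  simp only [Finset.sum_mul, ← Finset.sum_add_distrib]
  rw [Finset.sum_comm]
  refine Finset.sum_congr rfl fun β _ => Finset.sum_comm.trans ?_
  exact Finset.sum_congr rfl fun δ _ => Finset.sum_congr rfl fun α _ => by ring

lemma DwDz_quartic (s : Fin n → Fin n → Fin n → Fin n → ℂ) (j k : Fin n) (z w : Fin n → ℂ) :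
    Dw (Dz (quartic s) j) k z w =
      ∑ α, ∑ β, (s α β j k + s j β α k + s α k j β + s j k α β) * z α * w β := by
  rw [Dw, funext (Dz_quartic s j z), fderiv_quadratic_apply_single]
  simp only [← Finset.sum_add_distrib, Finset.sum_mul]
  rw [Finset.sum_comm]
  exact Finset.sum_congr rfl fun α _ => Finset.sum_congr rfl fun β _ => by ring

lemma infinite_range_coe_circle : (Set.range ((↑) : Circle → ℂ)).Infinite := by
  have h : (Circle.exp '' Set.Icc 0 1).Infinite :=
    (Set.Icc_infinite zero_lt_one).image (Circle.exp_injOn_Icc (by linarith [Real.pi_gt_three]))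
  exact (h.image Circle.coe_injective.injOn).mono (Set.image_subset_range _ _)

open Polynomial in
/-- After multiplication by `ω ^ N`, the sum is a polynomial in `ω` vanishing on the circle. -/
lemma sum_filter_eq_zero_of_forall_circle {ι : Type*} (T : Finset ι) (a : ι → ℂ) (k : ι → ℤ)
    (h : ∀ ω : Circle, ∑ i ∈ T, a i * (ω : ℂ) ^ k i = 0) (d : ℤ) :
    ∑ i ∈ T with k i = d, a i = 0 := by
  set N : ℤ := ∑ i ∈ T, ((k i).natAbs : ℤ)
  have hk : ∀ i ∈ T, 0 ≤ k i + N := fun i hi => by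
    have := Finset.single_le_sum (f := fun i => ((k i).natAbs : ℤ)) (fun _ _ => by positivity) hi
    omega
  by_cases hd : 0 ≤ d + N
  swap
  · refine Finset.sum_eq_zero fun i hi => ?_
    rw [Finset.mem_filter] at hi
    exact absurd (hk i hi.1) (by omega)
  set p : ℂ[X] := ∑ i ∈ T, C (a i) * X ^ (k i + N).toNat
  have hp : p = 0 := by
    refine eq_zero_of_infinite_isRoot p (infinite_range_coe_circle.mono ?_)
    rintro _ ⟨ω, rfl⟩
    have hω : (ω : ℂ) ≠ 0 := Circle.coe_ne_zero ω
    have hshift : ∀ i ∈ T,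
        a i * (ω : ℂ) ^ (k i + N).toNat = (ω : ℂ) ^ N * (a i * (ω : ℂ) ^ k i) := by
      intro i hi
      rw [← zpow_natCast, Int.toNat_of_nonneg (hk i hi), zpow_add₀ hω]
      ring
    simp only [Set.mem_ofPred_eq, IsRoot, p, eval_finsetSum, eval_mul, eval_C, eval_pow, eval_X]
    rw [Finset.sum_congr rfl hshift, ← Finset.mul_sum]
    exact mul_eq_zero_of_right _ (h ω)
  have hcoeff := congrArg (coeff · (d + N).toNat) hp
  simp only [p, finsetSum_coeff, coeff_C_mul, coeff_X_pow, mul_ite, mul_one, mul_zero,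
    coeff_zero] at hcoeff
  rw [Finset.sum_filter, ← hcoeff]
  refine Finset.sum_congr rfl fun i hi => ?_
  have := hk i hi
  congr 1
  exact propext (by omega)

/-- `t = (α, β, γ, δ)` indexes the coefficient `s_{α β̄ γ δ̄}` and the monomial
`z_α z̄_β z_γ z̄_δ`. -/
abbrev MultiIdx (n : ℕ) := Fin n × Fin n × Fin n × Fin n

def coeff (s : Fin n → Fin n → Fin n → Fin n → ℂ) (t : MultiIdx n) : ℂ :=
  s t.1 t.2.1 t.2.2.1 t.2.2.2

def mono (z : Fin n → ℂ) (t : MultiIdx n) : ℂ :=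
  z t.1 * conj (z t.2.1) * z t.2.2.1 * conj (z t.2.2.2)

def holIdx (t : MultiIdx n) : Multiset (Fin n) := {t.1, t.2.2.1}

def antiIdx (t : MultiIdx n) : Multiset (Fin n) := {t.2.1, t.2.2.2}

/-- The character by which the torus `z_j ↦ ω_j z_j` acts on `mono z t`. -/
def weight (t : MultiIdx n) (j : Fin n) : ℤ := (holIdx t).count j - (antiIdx t).count j

lemma quartic_conj_eq_sum (s : Fin n → Fin n → Fin n → Fin n → ℂ) (z : Fin n → ℂ) :
    quartic s z (fun j => conj (z j)) = ∑ t, coeff s t * mono z t := by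
  simp only [quartic, Fintype.sum_prod_type, coeff, mono, mul_assoc]

lemma update_mul_apply {ι : Type*} [DecidableEq ι] (z : ι → ℂ) (j i : ι) (ω : ℂ) :
    Function.update z j (ω * z j) i = ω ^ (if i = j then 1 else 0) * z i := by
  rcases eq_or_ne i j with rfl | h <;> simp [*]

lemma _root_.Multiset.count_pair {α : Type*} [DecidableEq α] (a b j : α) :
    ({a, b} : Multiset α).count j = (if a = j then 1 else 0) + (if b = j then 1 else 0) := by
  simp [Multiset.count_cons, Multiset.count_singleton, eq_comm, add_comm]

lemma mono_update_circle (z : Fin n → ℂ) (j : Fin n) (ω : Circle) (t : MultiIdx n) :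
    mono (Function.update z j (ω * z j)) t = (ω : ℂ) ^ weight t j * mono z t := by
  have hω : (ω : ℂ) ≠ 0 := Circle.coe_ne_zero ω
  simp only [mono, weight, holIdx, antiIdx, Multiset.count_pair, update_mul_apply, map_mul, map_pow,
    ← Circle.coe_inv_eq_conj, Circle.coe_inv, zpow_sub₀ hω, zpow_natCast, inv_pow]
  field_simp
  ring

lemma nSq_update_circle (z : Fin n → ℂ) (j : Fin n) (ω : Circle) :
    nSq n ℓ (Function.update z j (ω * z j)) = nSq n ℓ z := by
  refine Finset.sum_congr rfl fun i _ => ?_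
  rcases eq_or_ne i j with rfl | h
  · simp only [Function.update_self, map_mul, ← Circle.coe_inv_eq_conj, Circle.coe_inv]
    field_simp
  · simp [Function.update_of_ne h]

def VanishesOnNullCone (ℓ : ℕ) (c : MultiIdx n → ℂ) (T : Finset (MultiIdx n)) : Prop :=
  ∀ z : Fin n → ℂ, nSq n ℓ z = 0 → ∑ t ∈ T, c t * mono z t = 0

namespace VanishesOnNullCone

variable {c : MultiIdx n → ℂ} {T : Finset (MultiIdx n)}

lemma filter_weight (h : VanishesOnNullCone ℓ c T) (j : Fin n) (d : ℤ) :
    VanishesOnNullCone ℓ c (T.filter (weight · j = d)) := fun z hz =>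
  sum_filter_eq_zero_of_forall_circle T (fun t => c t * mono z t) (weight · j) (fun ω => by
    simpa [mono_update_circle, mul_comm, mul_assoc] using
      h _ ((nSq_update_circle z j ω).trans hz)) d

lemma filter_weight_eq (h : VanishesOnNullCone ℓ c Finset.univ) (w : Fin n → ℤ) :
    VanishesOnNullCone ℓ c (Finset.univ.filter (weight · = w)) := by
  have key (J : Finset (Fin n)) :
      VanishesOnNullCone ℓ c (Finset.univ.filter fun t => ∀ j ∈ J, weight t j = w j) := by
    induction J using Finset.induction_on with
    | empty => simpa using h
    | insert j J _ ih =>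
      convert ih.filter_weight j (w j) using 1
      ext t
      simp [and_comm]
  simpa [funext_iff] using key Finset.univ

end VanishesOnNullCone

lemma _root_.Multiset.pair_eq_pair_iff {α : Type*} {a b c d : α} :
    ({a, b} : Multiset α) = {c, d} ↔ (a = c ∧ b = d) ∨ (a = d ∧ b = c) := by
  change (([a, b] : List α) : Multiset α) = ([c, d] : List α) ↔ _
  rw [Multiset.coe_eq_coe, List.perm_pair]
  simp

lemma _root_.Multiset.exists_eq_pair_of_mem {α : Type*} {s : Multiset α} {x : α}
    (hs : Multiset.card s = 2) (hx : x ∈ s) : ∃ y, s = {x, y} := by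
  obtain ⟨r, rfl⟩ := Multiset.exists_cons_of_mem hx
  obtain ⟨y, rfl⟩ := Multiset.card_eq_one.1 (by simpa using hs)
  exact ⟨y, rfl⟩

lemma weight_eq_iff {t t' : MultiIdx n} :
    weight t = weight t' ↔ holIdx t + antiIdx t' = holIdx t' + antiIdx t := by
  simp only [funext_iff, weight, Multiset.ext, Multiset.count_add]
  exact forall_congr' fun j => by omega

lemma weight_eq_iff_of_disjoint {t₀ : MultiIdx n} (h : Disjoint (holIdx t₀) (antiIdx t₀))
    {t : MultiIdx n} : weight t = weight t₀ ↔ holIdx t = holIdx t₀ ∧ antiIdx t = antiIdx t₀ := by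
  refine ⟨fun ht => ?_, fun ht => by rw [weight_eq_iff, ht.1, ht.2, add_comm]⟩
  rw [weight_eq_iff] at ht
  have hle : holIdx t₀ ≤ holIdx t := by
    rw [Multiset.le_iff_count]
    intro j
    have := congrArg (Multiset.count j) ht
    simp only [Multiset.count_add] at this
    by_cases hj : j ∈ holIdx t₀
    · have : (antiIdx t₀).count j = 0 := Multiset.count_eq_zero.2 (Multiset.disjoint_left.1 h hj)
      omega
    · simp [Multiset.count_eq_zero.2 hj]
  have hhol : holIdx t = holIdx t₀ := (Multiset.eq_of_le_of_card_le hle (by simp [holIdx])).symm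
  exact ⟨hhol, by rw [hhol] at ht; exact (add_left_cancel ht).symm⟩

lemma weight_eq_iff_exists {a b c : Fin n} (hab : a ≠ b) {t : MultiIdx n} :
    weight t = weight (a, b, c, c) ↔ ∃ c', holIdx t = {a, c'} ∧ antiIdx t = {b, c'} := by
  rw [weight_eq_iff]
  constructor
  · intro ht
    have ht' : holIdx t + {b} = a ::ₘ antiIdx t := by
      have : holIdx t + {b} + {c} = a ::ₘ antiIdx t + {c} := by
        simpa [holIdx, antiIdx, Multiset.insert_eq_cons, ← Multiset.singleton_add, add_assoc,
          add_comm, add_left_comm] using ht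
      exact add_right_cancel this
    have ha : a ∈ holIdx t := by
      have : a ∈ holIdx t + {b} := ht' ▸ Multiset.mem_cons_self a _
      simpa [hab] using this
    obtain ⟨c', hc'⟩ := Multiset.exists_eq_pair_of_mem (by simp [holIdx]) ha
    refine ⟨c', hc', ?_⟩
    rw [hc', Multiset.insert_eq_cons, Multiset.cons_add, Multiset.cons_inj_right] at ht'
    rw [← ht', Multiset.singleton_add]
    exact Multiset.cons_swap _ _ _
  · rintro ⟨c', h1, h2⟩
    rw [h1, h2]
    ext j
    simp only [holIdx, antiIdx, Multiset.count_add, Multiset.count_pair]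
    split_ifs <;> omega

def fiber (p m : Multiset (Fin n)) : Finset (MultiIdx n) :=
  Finset.univ.filter fun t => holIdx t = p ∧ antiIdx t = m

lemma mem_fiber_self (t : MultiIdx n) : t ∈ fiber (holIdx t) (antiIdx t) := by
  simp [fiber]

lemma mono_congr (z : Fin n → ℂ) {t t' : MultiIdx n} (hh : holIdx t = holIdx t')
    (ha : antiIdx t = antiIdx t') : mono z t = mono z t' := by
  obtain ⟨α, β, γ, δ⟩ := t
  obtain ⟨α', β', γ', δ'⟩ := t'
  simp only [holIdx, antiIdx, Multiset.pair_eq_pair_iff] at hh ha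
  rcases hh with ⟨rfl, rfl⟩ | ⟨rfl, rfl⟩ <;> rcases ha with ⟨rfl, rfl⟩ | ⟨rfl, rfl⟩ <;>
    simp only [mono] <;> ring

lemma card_filter_pair_eq (α γ : Fin n) :
    (Finset.univ.filter fun p : Fin n × Fin n => ({p.1, p.2} : Multiset (Fin n)) = {α, γ}).card =
      if α = γ then 1 else 2 := by
  have : (Finset.univ.filter fun p : Fin n × Fin n => ({p.1, p.2} : Multiset (Fin n)) = {α, γ}) =
      {(α, γ), (γ, α)} := by
    ext ⟨β, δ⟩
    simp only [Finset.mem_filter, Finset.mem_univ, true_and, Finset.mem_insert,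
      Finset.mem_singleton, Multiset.pair_eq_pair_iff, Prod.ext_iff]
  rw [this]
  split_ifs with h
  · simp [h]
  · rw [Finset.card_pair (by simp [Prod.ext_iff, h])]

def epsR (n ℓ : ℕ) (j : Fin n) : ℝ := if (j : ℕ) < ℓ then -1 else 1

lemma ofReal_epsR (j : Fin n) : (epsR n ℓ j : ℂ) = eps n ℓ j := by
  unfold epsR eps; split <;> simp

lemma epsR_mul_self (j : Fin n) : epsR n ℓ j * epsR n ℓ j = 1 := by
  unfold epsR; split <;> norm_num

def IsPosNull {ι : Type*} [Fintype ι] (e v : ι → ℝ) : Prop := (∀ j, 0 < v j) ∧ ∑ j, e j * v j = 0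

lemma exists_isPosNull (hℓ : 0 < ℓ) (hℓn : ℓ < n) : ∃ ν, IsPosNull (epsR n ℓ) ν := by
  refine ⟨fun j => if (j : ℕ) < ℓ then (n - ℓ : ℝ) else ℓ, fun j => ?_, ?_⟩
  · have : (ℓ : ℝ) < n := by exact_mod_cast hℓn
    dsimp only
    split <;> [linarith; exact_mod_cast hℓ]
  · have h : ∀ j : Fin n, epsR n ℓ j * (if (j : ℕ) < ℓ then (n - ℓ : ℝ) else ℓ) =
        ℓ - n * (if (j : ℕ) < ℓ then 1 else 0) := fun j => by
      unfold epsR; split <;> ring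
    simp only [h, Finset.sum_sub_distrib, ← Finset.mul_sum, Finset.sum_boole, Finset.sum_const,
      Finset.card_univ, Fintype.card_fin, Fin.card_filter_val_lt, min_eq_right hℓn.le, nsmul_eq_mul]
    ring

def sqrtVec (v : Fin n → ℝ) : Fin n → ℂ := fun j => (Real.sqrt (v j) : ℂ)

lemma sqrtVec_mul_conj {v : Fin n → ℝ} {j : Fin n} (hv : 0 ≤ v j) :
    sqrtVec v j * conj (sqrtVec v j) = v j := by
  rw [sqrtVec, Complex.conj_ofReal, ← Complex.ofReal_mul, Real.mul_self_sqrt hv]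

lemma IsPosNull.nSq_sqrtVec {v : Fin n → ℝ} (hv : IsPosNull (epsR n ℓ) v) :
    nSq n ℓ (sqrtVec v) = 0 := by
  simp only [nSq, mul_assoc, sqrtVec_mul_conj (hv.1 _).le, ← ofReal_epsR]
  exact_mod_cast hv.2

lemma IsPosNull.sqrtVec_ne_zero {e v : Fin n → ℝ} (hv : IsPosNull e v) (j : Fin n) :
    sqrtVec v j ≠ 0 := by
  simp [sqrtVec, Real.sqrt_ne_zero'.2 (hv.1 j)]

section Hyperplane

variable {ι : Type*} [Fintype ι] {e ν : ι → ℝ}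

lemma eventually_forall_pos_mul_add (hν : ∀ j, 0 < ν j) (u : ι → ℝ) :
    ∀ᶠ K in Filter.atTop, ∀ j, 0 < K * ν j + u j :=
  Filter.eventually_all.2 fun j =>
    ((Filter.tendsto_id.atTop_mul_const (hν j)).atTop_add tendsto_const_nhds).eventually_gt_atTop 0

lemma IsPosNull.smul_add (hν : IsPosNull e ν) {K : ℝ} {u : ι → ℝ}
    (hK : ∀ j, 0 < K * ν j + u j) (hu : ∑ j, e j * u j = 0) :
    IsPosNull e (fun j => K * ν j + u j) := by
  refine ⟨hK, ?_⟩
  have : ∑ j, e j * (K * ν j + u j) = K * ∑ j, e j * ν j + ∑ j, e j * u j := by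
    simp only [mul_add, Finset.sum_add_distrib, Finset.mul_sum]
    exact congrArg (· + _) (Finset.sum_congr rfl fun j _ => by ring)
  rw [this, hν.2, hu, mul_zero, add_zero]

lemma sum_mul_eq_zero_of_isPosNull (hν : IsPosNull e ν) {A : ι → ℂ}
    (hA : ∀ v, IsPosNull e v → ∑ j, A j * v j = 0) {u : ι → ℝ} (hu : ∑ j, e j * u j = 0) :
    ∑ j, A j * u j = 0 := by
  obtain ⟨K, hK⟩ := (eventually_forall_pos_mul_add hν.1 u).exists
  have h := hA _ (hν.smul_add hK hu)
  have : ∑ j, A j * ((K * ν j + u j : ℝ) : ℂ) = K * ∑ j, A j * ν j + ∑ j, A j * u j := by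
    simp only [Complex.ofReal_add, Complex.ofReal_mul, mul_add, Finset.sum_add_distrib,
      Finset.mul_sum]
    exact congrArg (· + _) (Finset.sum_congr rfl fun j _ => by ring)
  rwa [this, hA ν hν, mul_zero, zero_add] at h

lemma quadratic_eq_zero_of_isPosNull (hν : IsPosNull e ν) {M : ι → ι → ℂ}
    (hM : ∀ v, IsPosNull e v → ∑ x, ∑ y, M x y * v x * v y = 0) {u : ι → ℝ}
    (hu : ∑ j, e j * u j = 0) : ∑ x, ∑ y, M x y * u x * u y = 0 := by
  obtain ⟨K, hKp, hKm⟩ := ((eventually_forall_pos_mul_add hν.1 u).and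
    (eventually_forall_pos_mul_add hν.1 (-u))).exists
  have hu' : ∑ j, e j * (-u) j = 0 := by simp [hu]
  have hp := hM _ (hν.smul_add hKp hu)
  have hm := hM _ (hν.smul_add hKm hu')
  have : ∑ x, ∑ y, M x y * ((K * ν x + u x : ℝ) : ℂ) * ((K * ν y + u y : ℝ) : ℂ) +
      ∑ x, ∑ y, M x y * ((K * ν x + (-u) x : ℝ) : ℂ) * ((K * ν y + (-u) y : ℝ) : ℂ) =
      2 * K ^ 2 * ∑ x, ∑ y, M x y * ν x * ν y + 2 * ∑ x, ∑ y, M x y * u x * u y := by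
    simp only [Finset.mul_sum, ← Finset.sum_add_distrib]
    refine Finset.sum_congr rfl fun x _ => Finset.sum_congr rfl fun y _ => ?_
    push_cast [Pi.neg_apply]
    ring
  rw [hp, hm, hM ν hν] at this
  linear_combination -this / 2

variable (he : ∀ j, e j * e j = 1)
include he

lemma mul_eq_mul_of_forall_sum_eq_zero [DecidableEq ι] {A : ι → ℂ}
    (hA : ∀ u : ι → ℝ, ∑ j, e j * u j = 0 → ∑ j, A j * u j = 0) (x y : ι) :
    e x * A x = e y * A y := by
  have h := hA (Pi.single x (e x) - Pi.single y (e y)) (by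
    simp [Pi.single_apply, mul_sub, Finset.sum_sub_distrib, he])
  simp [Pi.single_apply, mul_sub, Finset.sum_sub_distrib, apply_ite ((↑) : ℝ → ℂ)] at h
  linear_combination h

omit he in
lemma bilinear_eq_zero_of_forall_quadratic_eq_zero {M : ι → ι → ℂ} (hM : ∀ x y, M x y = M y x)
    (hB : ∀ u : ι → ℝ, ∑ j, e j * u j = 0 → ∑ x, ∑ y, M x y * u x * u y = 0) {u u' : ι → ℝ}
    (hu : ∑ j, e j * u j = 0) (hu' : ∑ j, e j * u' j = 0) : ∑ x, ∑ y, M x y * u x * u' y = 0 := by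
  have h := hB (u + u') (by simp [mul_add, Finset.sum_add_distrib, hu, hu'])
  have hswap : ∑ x, ∑ y, M x y * u' x * u y = ∑ x, ∑ y, M x y * u x * u' y := by
    rw [Finset.sum_comm]
    exact Finset.sum_congr rfl fun x _ => Finset.sum_congr rfl fun y _ => by rw [hM]; ring
  have : ∑ x, ∑ y, M x y * ((u + u') x : ℝ) * ((u + u') y : ℝ) =
      ∑ x, ∑ y, M x y * u x * u y + ∑ x, ∑ y, M x y * u' x * u' y +
        (∑ x, ∑ y, M x y * u x * u' y + ∑ x, ∑ y, M x y * u' x * u y) := by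
    simp only [← Finset.sum_add_distrib]
    refine Finset.sum_congr rfl fun x _ => Finset.sum_congr rfl fun y _ => ?_
    push_cast [Pi.add_apply]
    ring
  rw [this, hB u hu, hB u' hu', hswap] at h
  linear_combination h / 2

lemma exists_eq_of_forall_quadratic_eq_zero [DecidableEq ι] {M : ι → ι → ℂ}
    (hM : ∀ x y, M x y = M y x)
    (hB : ∀ u : ι → ℝ, ∑ j, e j * u j = 0 → ∑ x, ∑ y, M x y * u x * u y = 0) :
    ∃ c : ι → ℂ, ∀ x y, M x y = e x * c y + e y * c x := by
  have rel : ∀ x y z w : ι,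
      e x * e z * M x z - e x * e w * M x w - e y * e z * M y z + e y * e w * M y w = 0 := by
    intro x y z w
    have h := bilinear_eq_zero_of_forall_quadratic_eq_zero hM hB
      (u := Pi.single x (e x) - Pi.single y (e y)) (u' := Pi.single z (e z) - Pi.single w (e w))
      (by simp [Pi.single_apply, mul_sub, Finset.sum_sub_distrib, he])
      (by simp [Pi.single_apply, mul_sub, Finset.sum_sub_distrib, he])
    simp [Pi.single_apply, mul_sub, sub_mul, Finset.sum_sub_distrib, apply_ite ((↑) : ℝ → ℂ)] at h
    linear_combination h
  have he' : ∀ j, (e j : ℂ) * e j = 1 := fun j => by exact_mod_cast he j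
  rcases isEmpty_or_nonempty ι with _ | ⟨⟨q⟩⟩
  · exact ⟨0, fun x => isEmptyElim x⟩
  refine ⟨fun x => e q * M x q - e x * M q q / 2, fun x z => ?_⟩
  linear_combination (e x * e z : ℂ) * rel x q z q - M x z * he' x - M x z * e x ^ 2 * he' z +
    e q * e x * M z q * he' z + e q * e z * M x q * he' x - e x * e z * M q q * he' q +
    e x * e z ^ 2 * e q * hM q z

lemma eq_zero_of_mul_eq_mul_of_sum_eq_zero {m : ι → ℕ} (hm : ∀ x, 0 < m x) {S : ι → ℂ}
    (hrel : ∀ x y, e x * (m x * S x) = e y * (m y * S y)) (htr : ∑ x, e x * S x = 0) (x : ι) :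
    S x = 0 := by
  have he' : ∀ j, (e j : ℂ) * e j = 1 := fun j => by exact_mod_cast he j
  have hm' : ∀ y, (m y : ℂ) ≠ 0 := fun y => Nat.cast_ne_zero.2 (hm y).ne'
  obtain ⟨c, hc⟩ : ∃ c, e x * (m x * S x) = c := ⟨_, rfl⟩
  have hS : ∀ y, S y = e y * c / m y := fun y => by
    rw [eq_div_iff (hm' y), ← hc, hrel x y]
    linear_combination (-(m y * S y)) * he' y
  have hsum : c * ∑ y, ((m y : ℂ))⁻¹ = 0 := by
    rw [← htr, Finset.mul_sum]
    refine Finset.sum_congr rfl fun y _ => ?_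
    rw [hS y, div_eq_mul_inv]
    linear_combination (-(c * (m y : ℂ)⁻¹)) * he' y
  have hpos : (0 : ℝ) < ∑ y, ((m y : ℝ))⁻¹ :=
    Finset.sum_pos (fun y _ => by have := hm y; positivity) ⟨x, Finset.mem_univ x⟩
  have hne : (∑ y, ((m y : ℂ))⁻¹) ≠ 0 := by
    have := Complex.ofReal_ne_zero.2 hpos.ne'
    push_cast at this
    exact this
  rw [hS x, (mul_eq_zero.1 hsum).resolve_right hne, mul_zero, zero_div]

lemma eq_zero_of_quadratic_eq_of_sum_eq_zero [DecidableEq ι] {S : ι → ι → ℂ} {c : ι → ℂ}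
    (hS : ∀ x y, (if x = y then 1 else 2) * S x y = e x * c y + e y * c x)
    (htr : ∀ y, ∑ x, e x * S x y = 0) (x y : ι) : S x y = 0 := by
  have he' : ∀ j, (e j : ℂ) * e j = 1 := fun j => by exact_mod_cast he j
  obtain ⟨Λ, hΛ⟩ : ∃ Λ, ∑ x, (e x : ℂ) * c x = Λ := ⟨_, rfl⟩
  have h2S : ∀ x y, 2 * S x y = e x * c y + e y * c x + if x = y then 2 * e y * c y else 0 := by
    intro x y
    have := hS x y
    split_ifs at this ⊢ with h
    · subst h; linear_combination 2 * this
    · linear_combination this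
  have hsq : ∀ a : ℂ, ∑ x, (e x : ℂ) * (e x * a) = Fintype.card ι * a := fun a => by
    simp [← mul_assoc, he']
  have hc : ∀ y, ((Fintype.card ι : ℂ) + 2) * c y + e y * Λ = 0 := by
    intro y
    have hcross : ∑ x, (e x : ℂ) * (e y * c x) = e y * Λ := by
      rw [← hΛ, Finset.mul_sum]
      exact Finset.sum_congr rfl fun x _ => by ring
    have h0 : ∑ x, (e x : ℂ) * (2 * S x y) = 0 := by
      simp only [mul_left_comm _ (2 : ℂ), ← Finset.mul_sum, htr y, mul_zero]
    simp only [h2S, mul_add, Finset.sum_add_distrib, mul_ite, mul_zero, Finset.sum_ite_eq',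
      Finset.mem_univ, if_true, hsq, hcross] at h0
    linear_combination h0 - 2 * c y * he' y
  have hΛ0 : Λ = 0 := by
    have h : ∑ y, (e y : ℂ) * (((Fintype.card ι : ℂ) + 2) * c y + e y * Λ) = 0 := by simp [hc]
    simp only [mul_add, Finset.sum_add_distrib, hsq, mul_left_comm _ ((Fintype.card ι : ℂ) + 2),
      ← Finset.mul_sum, hΛ] at h
    have h2 : ((2 : ℂ) * Fintype.card ι + 2) * Λ = 0 := by linear_combination h
    exact (mul_eq_zero.1 h2).resolve_left (by norm_cast)
  have hc0 : ∀ y, c y = 0 := fun y => by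
    have := hc y
    rw [hΛ0, mul_zero, add_zero] at this
    exact (mul_eq_zero.1 this).resolve_left (by norm_cast)
  have := hS x y
  rw [hc0, hc0, mul_zero, mul_zero, add_zero] at this
  exact (mul_eq_zero.1 this).resolve_left (by split_ifs <;> norm_num)

end Hyperplane

section Symmetric

variable {s : Fin n → Fin n → Fin n → Fin n → ℂ}
  (hsym1 : ∀ α β γ δ, s α β γ δ = s γ β α δ) (hsym2 : ∀ α β γ δ, s α β γ δ = s γ δ α β)
include hsym1 hsym2

lemma lapL_quartic (z w : Fin n → ℂ) :
    lapL ℓ (quartic s) z w = 4 * ∑ α, ∑ β, signedTrace ℓ s α β * z α * w β := by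
  have h4 : ∀ j α β, s α β j j + s j β α j + s α j j β + s j j α β = 4 * s j j α β :=
    fun j α β => by
      linear_combination hsym2 α β j j + (hsym1 j β α j).trans (hsym2 α β j j) + hsym1 α j j β
  simp only [lapL, DwDz_quartic, h4, signedTrace, Finset.mul_sum, Finset.sum_mul]
  rw [Finset.sum_comm]
  refine Finset.sum_congr rfl fun α _ => Finset.sum_comm.trans ?_
  exact Finset.sum_congr rfl fun β _ => Finset.sum_congr rfl fun j _ => by ring

lemma signedTrace_eq_zero
    (hharm : ∀ z : Fin n → ℂ, lapL ℓ (quartic s) z (fun j => conj (z j)) = 0) (γ δ : Fin n) :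
    signedTrace ℓ s γ δ = 0 :=
  eq_zero_of_forall_herm_eq_zero (fun z => by
    simpa [lapL_quartic hsym1 hsym2, herm] using hharm z) γ δ

lemma coeff_congr {t t' : MultiIdx n} (hh : holIdx t = holIdx t') (ha : antiIdx t = antiIdx t') :
    coeff s t = coeff s t' := by
  have hanti : ∀ α β γ δ, s α β γ δ = s α δ γ β := fun α β γ δ => by rw [hsym2, hsym1]
  obtain ⟨α, β, γ, δ⟩ := t
  obtain ⟨α', β', γ', δ'⟩ := t'
  simp only [holIdx, antiIdx, Multiset.pair_eq_pair_iff] at hh ha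
  rcases hh with ⟨rfl, rfl⟩ | ⟨rfl, rfl⟩ <;> rcases ha with ⟨rfl, rfl⟩ | ⟨rfl, rfl⟩ <;>
    simp only [coeff] <;>
    first | rfl | exact hsym1 _ _ _ _ | exact hsym2 _ _ _ _ | exact hanti _ _ _ _

lemma sum_fiber (z : Fin n → ℂ) {p m : Multiset (Fin n)} {t₀ : MultiIdx n}
    (ht₀ : t₀ ∈ fiber p m) :
    ∑ t ∈ fiber p m, coeff s t * mono z t = (fiber p m).card * (coeff s t₀ * mono z t₀) := by
  rw [← nsmul_eq_mul, ← Finset.sum_const]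
  refine Finset.sum_congr rfl fun t ht => ?_
  simp only [fiber, Finset.mem_filter] at ht ht₀
  have hh := ht.2.1.trans ht₀.2.1.symm
  have ha := ht.2.2.trans ht₀.2.2.symm
  rw [coeff_congr hsym1 hsym2 hh ha, mono_congr z hh ha]

lemma coeff_eq_zero_of_holIdx_ne (hdisj : ∀ t, Disjoint (holIdx t) (antiIdx t) → coeff s t = 0)
    (hmix : ∀ a b c, a ≠ b → s a b c c = 0) (t : MultiIdx n) (ht : holIdx t ≠ antiIdx t) :
    coeff s t = 0 := by
  by_cases hd : Disjoint (holIdx t) (antiIdx t)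
  · exact hdisj t hd
  obtain ⟨x, hxh, hxa⟩ : ∃ x, x ∈ holIdx t ∧ x ∈ antiIdx t := by
    simpa [Multiset.disjoint_left] using hd
  obtain ⟨a, ha⟩ := Multiset.exists_eq_pair_of_mem (by simp [holIdx]) hxh
  obtain ⟨b, hb⟩ := Multiset.exists_eq_pair_of_mem (by simp [antiIdx]) hxa
  rw [coeff_congr hsym1 hsym2 (t' := (a, b, x, x)) (ha.trans (Multiset.pair_comm _ _))
    (hb.trans (Multiset.pair_comm _ _))]
  exact hmix a b x fun hab => ht (by rw [ha, hb, hab])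

lemma sum_coeff_mul_mono_eq_diagonal (hoff : ∀ t, holIdx t ≠ antiIdx t → coeff s t = 0)
    (z : Fin n → ℂ) :
    ∑ t, coeff s t * mono z t = ∑ α, ∑ γ,
      ((if α = γ then 1 else 2) * s α α γ γ) * (z α * conj (z α)) * (z γ * conj (z γ)) := by
  simp only [Fintype.sum_prod_type]
  refine Finset.sum_congr rfl fun α _ => Finset.sum_comm.trans (Finset.sum_congr rfl fun γ _ => ?_)
  obtain ⟨X, hX⟩ : ∃ X, coeff s (α, α, γ, γ) * mono z (α, α, γ, γ) = X := ⟨_, rfl⟩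
  have hterm : ∀ β δ, coeff s (α, β, γ, δ) * mono z (α, β, γ, δ) =
      if ({β, δ} : Multiset (Fin n)) = {α, γ} then X else 0 := by
    intro β δ
    split_ifs with h
    · rw [← hX]
      exact congr_arg₂ (· * ·) (coeff_congr hsym1 hsym2 rfl h) (mono_congr z rfl h)
    · rw [hoff (α, β, γ, δ) fun h' => h h'.symm, zero_mul]
  simp only [hterm]
  rw [← Fintype.sum_prod_type'
      (f := fun β δ => if ({β, δ} : Multiset (Fin n)) = {α, γ} then X else 0),
    Finset.sum_ite, Finset.sum_const_zero, add_zero, Finset.sum_const, nsmul_eq_mul,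
    card_filter_pair_eq, ← hX]
  simp only [coeff, mono]
  push_cast
  ring

variable (hv : VanishesOnNullCone ℓ (coeff s) Finset.univ)
include hv

lemma coeff_eq_zero_of_disjoint {z : Fin n → ℂ} (hz : nSq n ℓ z = 0) (hz0 : ∀ j, z j ≠ 0)
    (t₀ : MultiIdx n) (h : Disjoint (holIdx t₀) (antiIdx t₀)) : coeff s t₀ = 0 := by
  have hF : Finset.univ.filter (weight · = weight t₀) = fiber (holIdx t₀) (antiIdx t₀) := by
    ext t
    simp [fiber, weight_eq_iff_of_disjoint h]
  have h0 := hv.filter_weight_eq (weight t₀) z hz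
  rw [hF, sum_fiber hsym1 hsym2 z (mem_fiber_self t₀)] at h0
  have hcard : ((fiber (holIdx t₀) (antiIdx t₀)).card : ℂ) ≠ 0 :=
    Nat.cast_ne_zero.2 (Finset.card_ne_zero_of_mem (mem_fiber_self t₀))
  have hmono : mono z t₀ ≠ 0 := by simp [mono, hz0]
  simpa [hcard, hmono] using h0

lemma mixed_eq_zero {ν : Fin n → ℝ} (hν : IsPosNull (epsR n ℓ) ν)
    (htr : ∀ γ δ, signedTrace ℓ s γ δ = 0) (a b c : Fin n) (hab : a ≠ b) : s a b c c = 0 := by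
  set m : Fin n → ℕ := fun c => (fiber {a, c} {b, c}).card
  have hF : Finset.univ.filter (weight · = weight (a, b, a, a)) =
      Finset.univ.biUnion fun c => fiber {a, c} {b, c} := by
    ext t
    simp [fiber, weight_eq_iff_exists hab]
  have hdisj : Set.PairwiseDisjoint (Finset.univ : Finset (Fin n))
      fun c => fiber {a, c} {b, c} := by
    intro c _ c' _ hcc'
    refine Finset.disjoint_left.2 fun t ht ht' => hcc' ?_
    simp only [fiber, Finset.mem_filter] at ht ht'
    simpa [Multiset.insert_eq_cons] using ht.2.1.symm.trans ht'.2.1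
  have hlin : ∀ v, IsPosNull (epsR n ℓ) v → ∑ c, (m c * s a b c c) * (v c : ℂ) = 0 := by
    intro v hv'
    have h := hv.filter_weight_eq (weight (a, b, a, a)) _ hv'.nSq_sqrtVec
    rw [hF, Finset.sum_biUnion hdisj, Finset.sum_congr rfl fun c _ => sum_fiber hsym1 hsym2
      (sqrtVec v) (p := {a, c}) (m := {b, c}) (mem_fiber_self (a, b, c, c))] at h
    have hmono : ∀ c, mono (sqrtVec v) (a, b, c, c) = sqrtVec v a * conj (sqrtVec v b) * v c :=
      fun c => by rw [mono, mul_assoc _ (sqrtVec v c), sqrtVec_mul_conj (hv'.1 c).le]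
    have hA : sqrtVec v a * conj (sqrtVec v b) ≠ 0 := by
      simp [hv'.sqrtVec_ne_zero a, hv'.sqrtVec_ne_zero b]
    simp only [hmono] at h
    refine (mul_eq_zero.1 (?_ : sqrtVec v a * conj (sqrtVec v b) * _ = 0)).resolve_left hA
    rw [← h, Finset.mul_sum]
    exact Finset.sum_congr rfl fun c _ => by simp only [coeff, m]; ring
  have hrel := mul_eq_mul_of_forall_sum_eq_zero epsR_mul_self
    (fun u hu => sum_mul_eq_zero_of_isPosNull hν hlin hu)
  refine eq_zero_of_mul_eq_mul_of_sum_eq_zero epsR_mul_self (S := fun c => s a b c c)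
    (fun c => Finset.card_pos.2 ⟨_, mem_fiber_self (a, b, c, c)⟩) hrel ?_ c
  simpa [signedTrace, ofReal_epsR, hsym2 _ _ a b] using htr a b

lemma diagonal_eq_zero {ν : Fin n → ℝ} (hν : IsPosNull (epsR n ℓ) ν)
    (htr : ∀ γ δ, signedTrace ℓ s γ δ = 0) (hoff : ∀ t, holIdx t ≠ antiIdx t → coeff s t = 0)
    (a c : Fin n) : s a a c c = 0 := by
  have hquad : ∀ v, IsPosNull (epsR n ℓ) v →
      ∑ x, ∑ y, ((if x = y then 1 else 2) * s x x y y) * (v x : ℂ) * (v y : ℂ) = 0 := by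
    intro v hv'
    have h := hv _ hv'.nSq_sqrtVec
    rw [sum_coeff_mul_mono_eq_diagonal hsym1 hsym2 hoff] at h
    simpa only [sqrtVec_mul_conj (hv'.1 _).le] using h
  have hsymm : ∀ x y, (if x = y then 1 else 2) * s x x y y = (if y = x then 1 else 2) * s y y x x :=
    fun x y => by
      rw [hsym2 x x y y]
      rcases eq_or_ne x y with rfl | h
      · rfl
      · simp [h, h.symm]
  obtain ⟨c', hc'⟩ := exists_eq_of_forall_quadratic_eq_zero epsR_mul_self hsymm
    (fun u hu => quadratic_eq_zero_of_isPosNull hν hquad hu)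
  exact eq_zero_of_quadratic_eq_of_sum_eq_zero epsR_mul_self (S := fun x y => s x x y y) hc'
    (fun y => by simpa [signedTrace, ofReal_epsR] using htr y y) a c

end Symmetric

end ChernMoser

theorem stmt5_general {n ℓ : ℕ} (hl0 : 0 < ℓ) (hl : 2 * ℓ ≤ n)
    (s : Fin n → Fin n → Fin n → Fin n → ℂ)
    (hsym1 : ∀ α β γ δ, s α β γ δ = s γ β α δ)
    (hsym2 : ∀ α β γ δ, s α β γ δ = s γ δ α β)
    (hharm : ∀ z : Fin n → ℂ, lapL ℓ (quartic s) z (fun j => conj (z j)) = 0)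
    (hnull : ∀ z : Fin n → ℂ, nSq n ℓ z = 0 → quartic s z (fun j => conj (z j)) = 0) :
    ∀ z : Fin n → ℂ, quartic s z (fun j => conj (z j)) = 0 := by
  open ChernMoser in
  intro z
  obtain ⟨ν, hν⟩ := exists_isPosNull (n := n) hl0 (by omega)
  have htr := signedTrace_eq_zero hsym1 hsym2 hharm
  have hv : VanishesOnNullCone ℓ (coeff s) Finset.univ := fun w hw => by
    rw [← quartic_conj_eq_sum]
    exact hnull w hw
  have hoff := coeff_eq_zero_of_holIdx_ne hsym1 hsym2
    (coeff_eq_zero_of_disjoint hsym1 hsym2 hv hν.nSq_sqrtVec hν.sqrtVec_ne_zero)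
    (mixed_eq_zero hsym1 hsym2 hv hν htr)
  rw [quartic_conj_eq_sum, sum_coeff_mul_mono_eq_diagonal hsym1 hsym2 hoff]
  simp [diagonal_eq_zero hsym1 hsym2 hv hν htr hoff]

/-- a real bidegree (2,2) polynomial satisfying the Chern-Moser-Weyl
symmetry relations and `△_ℓ s ≡ 0` which vanishes on the null cone
`𝒞_ℓ = {|z|_ℓ² = 0}` vanishes identically, provided `0 < ℓ ≤ n/2`. -/
theorem stmt5 {n ℓ : ℕ} (hl0 : 0 < ℓ) (hl : 2 * ℓ ≤ n)
    (s : Fin n → Fin n → Fin n → Fin n → ℂ)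
    (hsym1 : ∀ α β γ δ, s α β γ δ = s γ β α δ)
    (hsym2 : ∀ α β γ δ, s α β γ δ = s γ δ α β)
    (hreal : ∀ α β γ δ, conj (s α β γ δ) = s β α δ γ)
    (hharm : ∀ z : Fin n → ℂ, lapL ℓ (quartic s) z (fun j => conj (z j)) = 0)
    (hnull : ∀ z : Fin n → ℂ, nSq n ℓ z = 0 → quartic s z (fun j => conj (z j)) = 0) :
    ∀ z : Fin n → ℂ, quartic s z (fun j => conj (z j)) = 0 :=
  stmt5_general hl0 hl s hsym1 hsym2 hharm hnull

end
end

section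
/- Let $\phi^{(2)}(z)$ be a vector of holomorphic quadratic polynomials on $\mathbb{C}^n$ with values in $\mathbb{C}^{N-n}$, let $a^{(1)}(z)$ be a vector of linear holomorphic polynomials, and let $s(z,\bar z)$ be a real bidegree-$(2,2)$ polynomial with $\triangle_\ell s = 0$, satisfying $\langle a^{(1)}(z), \bar z\rangle_\ell |z|_\ell^2 = |\phi^{(2)}(z)|^2 + \frac{1}{4} s(z,\bar z)$ identically on $\mathbb{C}^n$. Then for every $z$ with $|z|_\ell^2 = 0$, one has $s(z,\bar z) \le 0$. -/
open scoped BigOperators ComplexConjugate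

noncomputable section

/-- if `⟨a⁽¹⁾(z), z̄⟩_ℓ |z|_ℓ² = |φ⁽²⁾(z)|² + (1/4) s(z,z̄)` with `φ⁽²⁾`
a `ℂ^{N-n}`-valued vector of holomorphic quadratic polynomials and `s` real,
bidegree (2,2) and `△_ℓ`-harmonic, then `s ≤ 0` on the null cone `{|z|_ℓ² = 0}`. -/
theorem stmt7 {n ℓ m : ℕ} (hl : 2 * ℓ ≤ n)
    (c : Fin m → Fin n → Fin n → ℂ)
    (a : Fin n → Fin n → ℂ)
    (s : Fin n → Fin n → Fin n → Fin n → ℂ)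
    (hsreal : ∀ α β γ δ, conj (s α β γ δ) = s β α δ γ)
    (hs : ∀ z : Fin n → ℂ, lapL ℓ (quartic s) z (fun j => conj (z j)) = 0)
    (heq : ∀ z : Fin n → ℂ,
      (∑ j : Fin n, eps n ℓ j * (∑ k : Fin n, a j k * z k) * conj (z j)) * nSq n ℓ z
        = (∑ j : Fin m,
            (∑ k : Fin n, ∑ l : Fin n, c j k l * z k * z l)
              * conj (∑ k : Fin n, ∑ l : Fin n, c j k l * z k * z l))
          + (1 / 4) * quartic s z (fun j => conj (z j))) :
    ∀ z : Fin n → ℂ, nSq n ℓ z = 0 → (quartic s z (fun j => conj (z j))).re ≤ 0 := by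
  intro z hz
  have h := heq z
  rw [hz, mul_zero] at h
  have hQ : quartic s z (fun j => conj (z j))
      = -4 * ∑ j : Fin m,
            (∑ k : Fin n, ∑ l : Fin n, c j k l * z k * z l)
              * conj (∑ k : Fin n, ∑ l : Fin n, c j k l * z k * z l) := by
    linear_combination -4 * h
  rw [hQ]
  have hS : 0 ≤ (∑ j : Fin m,
            (∑ k : Fin n, ∑ l : Fin n, c j k l * z k * z l)
              * conj (∑ k : Fin n, ∑ l : Fin n, c j k l * z k * z l)).re := by
    rw [Complex.re_sum]
    apply Finset.sum_nonneg
    intro j _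
    rw [Complex.mul_conj]
    simp [Complex.normSq_nonneg]
  have : ((-4 : ℂ) * ∑ j : Fin m,
            (∑ k : Fin n, ∑ l : Fin n, c j k l * z k * z l)
              * conj (∑ k : Fin n, ∑ l : Fin n, c j k l * z k * z l)).re
      = -4 * (∑ j : Fin m,
            (∑ k : Fin n, ∑ l : Fin n, c j k l * z k * z l)
              * conj (∑ k : Fin n, ∑ l : Fin n, c j k l * z k * z l)).re := by
    norm_num [Complex.mul_re]
  rw [this]
  linarith

end
end

section
/- Let $\psi(z,\epsilon) = \varepsilon_0(|z|^8 + c\,\mathrm{Re}(|z|^2 z^6)) + |z|^{10} + \epsilon|z|^2$ for $z \in \mathbb{C}$, where $\varepsilon_0 > 0$ and $2 < c < 16/7$. Then there exists $\tilde\epsilon > 0$ such that for every $0 < \epsilon \le \tilde\epsilon$, there is a point $\mu_0 \in \mathbb{C}$ with $\psi(\mu_0,\epsilon) < 0$. In particular one may take $\mu_0 = \lambda' e^{i\pi/6}$ for suitable small $\lambda' > 0$. -/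
noncomputable section

/-- `ψ(z,ε) = ε₀(|z|⁸ + c Re(|z|² z⁶)) + |z|¹⁰ + ε |z|²` on `ℂ`. -/
def psi (ε₀ c : ℝ) (z : ℂ) (e : ℝ) : ℝ :=
  ε₀ * (‖z‖ ^ 8 + c * (‖z‖ ^ 2 * (z ^ 6).re))
    + ‖z‖ ^ 10 + e * ‖z‖ ^ 2

/-! On the ray `arg z = π/6` we have `z⁶ = -|z|⁶`, so `ψ(λ e^{iπ/6}, ε) = -ε₀(c - 1)λ⁸ + λ¹⁰ + ελ²`.
For `c > 1` the negative `λ⁸` term beats `λ¹⁰` once `λ² = ε₀(c - 1)/2`, and beats `ελ²` once `ε`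
is small compared with `ε₀(c - 1)λ⁶`. -/

lemma ofReal_mul_exp_pi_mul_I_div_six_pow_six (lam : ℝ) :
    ((lam : ℂ) * Complex.exp (Real.pi * Complex.I / 6)) ^ 6 = -((lam ^ 6 : ℝ) : ℂ) := by
  rw [mul_pow, ← Complex.exp_nat_mul, show ((6 : ℕ) : ℂ) * (Real.pi * Complex.I / 6)
    = Real.pi * Complex.I by push_cast; ring, Complex.exp_pi_mul_I]
  push_cast
  ring

lemma norm_ofReal_mul_exp_pi_mul_I_div_six {lam : ℝ} (hlam : 0 ≤ lam) :
    ‖(lam : ℂ) * Complex.exp (Real.pi * Complex.I / 6)‖ = lam := by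
  rw [norm_mul, Complex.norm_exp, Complex.norm_of_nonneg hlam]
  simp

lemma psi_ofReal_mul_exp_pi_mul_I_div_six (ε₀ c e : ℝ) {lam : ℝ} (hlam : 0 ≤ lam) :
    psi ε₀ c ((lam : ℂ) * Complex.exp (Real.pi * Complex.I / 6)) e
      = -(ε₀ * (c - 1)) * lam ^ 8 + lam ^ 10 + e * lam ^ 2 := by
  rw [psi, norm_ofReal_mul_exp_pi_mul_I_div_six hlam, ofReal_mul_exp_pi_mul_I_div_six_pow_six,
    ← Complex.ofReal_neg, Complex.ofReal_re]
  ring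

lemma exists_pow_ten_add_mul_sq_lt_mul_pow_eight {a : ℝ} (ha : 0 < a) :
    ∃ te : ℝ, 0 < te ∧ ∃ lam : ℝ, 0 < lam ∧ ∀ e : ℝ, e ≤ te →
      lam ^ 10 + e * lam ^ 2 < a * lam ^ 8 := by
  set lam := Real.sqrt (a / 2)
  have hlam : 0 < lam := Real.sqrt_pos.mpr (by positivity)
  have hlam_sq : lam ^ 2 = a / 2 := Real.sq_sqrt (by positivity)
  refine ⟨a * lam ^ 6 / 4, by positivity, lam, hlam, fun e he => ?_⟩
  have h10 : lam ^ 10 = a / 2 * lam ^ 8 := by rw [← hlam_sq]; ring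
  have he : e * lam ^ 2 ≤ a / 4 * lam ^ 8 := by
    calc e * lam ^ 2 ≤ a * lam ^ 6 / 4 * lam ^ 2 := by gcongr
      _ = a / 4 * lam ^ 8 := by ring
  have h8 : 0 < a * lam ^ 8 := by positivity
  linarith

theorem stmt9_general (ε₀ c : ℝ) (hε₀ : 0 < ε₀) (hc1 : 2 < c) :
    ∃ te : ℝ, 0 < te ∧ ∃ lam : ℝ, 0 < lam ∧ ∀ e : ℝ, 0 < e → e ≤ te →
      psi ε₀ c ((lam : ℂ) * Complex.exp (Real.pi * Complex.I / 6)) e < 0 := by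
  obtain ⟨te, hte, lam, hlam, hneg⟩ :=
    exists_pow_ten_add_mul_sq_lt_mul_pow_eight (mul_pos hε₀ (by linarith : (0 : ℝ) < c - 1))
  refine ⟨te, hte, lam, hlam, fun e _ he => ?_⟩
  rw [psi_ofReal_mul_exp_pi_mul_I_div_six ε₀ c e hlam.le]
  linarith [hneg e he]

/-- for `ε₀ > 0` and `2 < c < 16/7` there is `ε̃ > 0` such that for all
`0 < ε ≤ ε̃` the function `ψ(·,ε)` takes a negative value, indeed at a point of the
form `μ₀ = λ' e^{iπ/6}` with `λ' > 0` small. -/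
theorem stmt9 (ε₀ c : ℝ) (hε₀ : 0 < ε₀) (hc1 : 2 < c) (hc2 : c < 16 / 7) :
    ∃ te : ℝ, 0 < te ∧ ∃ lam : ℝ, 0 < lam ∧ ∀ e : ℝ, 0 < e → e ≤ te →
      psi ε₀ c ((lam : ℂ) * Complex.exp (Real.pi * Complex.I / 6)) e < 0 :=
  stmt9_general ε₀ c hε₀ hc1

end
end

section
/- Let $\rho_\epsilon(z,w) = \varepsilon_0(|z|^8 + c\,\mathrm{Re}(|z|^2 z^6)) + |w|^2 + |z|^{10} + \epsilon|z|^2 - 1$ on $\mathbb{C}^2$, with $\varepsilon_0 > 0$, $2 < c < 16/7$, and $0 < \epsilon < 1$. Then the set $M_\epsilon = \{\rho_\epsilon = 0\}$ is compact, and for $\tilde\epsilon$ sufficiently small and $0 < \epsilon \le \tilde\epsilon$, the intersection of $M_\epsilon$ with the complex line $\{w = 1\}$ is an infinite set. -/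
/-!
Compactness: since `Re(z⁶) ≥ -|z|⁶`, on `M_ε` we have `|w|² + |z|¹⁰ ≤ 1 + ε₀ c |z|⁸`, which
bounds `|z|` and then `|w|`; `M_ε` is a closed subset of a product of closed discs.

Infiniteness: on the line `w = 1` and the circle `|z| = r`, `ρ_ε` equals
`r² (ε₀ r⁶ (1 + c cos 6θ) + r⁸ + ε)`. It is positive at `θ = 0`, and at `θ = π/6` it is
`≤ 0` as soon as `c ≥ 2`, `2r² ≤ ε₀` and `2ε ≤ ε₀ r⁶`. By connectedness of the circle it
vanishes somewhere on it, and these radius conditions hold on a whole interval of radii.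
-/

noncomputable section

/-- The defining function `ρ_ε(z,w) = ε₀(|z|⁸ + c Re(|z|² z⁶)) + |w|² + |z|¹⁰ + ε|z|² - 1`
of the perturbed Kohn-Nirenberg hypersurface. -/
def rhoKN (ε₀ c e : ℝ) (p : ℂ × ℂ) : ℝ :=
  ε₀ * (‖p.1‖ ^ 8 + c * (‖p.1‖ ^ 2 * (p.1 ^ 6).re))
    + ‖p.2‖ ^ 2 + ‖p.1‖ ^ 10 + e * ‖p.1‖ ^ 2 - 1

lemma Complex.neg_norm_pow_le_re_pow (z : ℂ) (n : ℕ) : -(‖z‖ ^ n) ≤ (z ^ n).re := by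
  rw [← norm_pow]
  exact neg_le_of_abs_le (Complex.abs_re_le_norm _)

lemma le_one_add_of_pow_ten_le {r A : ℝ} (hA : 0 ≤ A)
    (h : r ^ 10 ≤ 1 + A * r ^ 8) : r ≤ 1 + A := by
  by_contra! hlt
  have h1 : 1 ≤ r ^ 8 := one_le_pow₀ (by linarith)
  have h2 : 1 + A < r ^ 2 := by nlinarith
  nlinarith [mul_lt_mul_of_pos_right h2 (by positivity : 0 < r ^ 8)]

lemma continuous_rhoKN (ε₀ c e : ℝ) : Continuous (rhoKN ε₀ c e) := by
  unfold rhoKN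
  fun_prop

section

variable {ε₀ c e : ℝ}

lemma sq_add_pow_ten_le_of_rhoKN_eq_zero (hε₀ : 0 ≤ ε₀) (hc : 0 ≤ c) (he : 0 ≤ e)
    {p : ℂ × ℂ} (hp : rhoKN ε₀ c e p = 0) :
    ‖p.2‖ ^ 2 + ‖p.1‖ ^ 10 ≤ 1 + ε₀ * c * ‖p.1‖ ^ 8 := by
  have hre : -(‖p.1‖ ^ 2 * ‖p.1‖ ^ 6) ≤ ‖p.1‖ ^ 2 * (p.1 ^ 6).re := by
    rw [← mul_neg]
    exact mul_le_mul_of_nonneg_left (Complex.neg_norm_pow_le_re_pow _ _) (by positivity)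
  unfold rhoKN at hp
  nlinarith [mul_le_mul_of_nonneg_left hre (mul_nonneg hε₀ hc),
    mul_nonneg hε₀ (pow_nonneg (norm_nonneg p.1) 8), mul_nonneg he (sq_nonneg ‖p.1‖)]

theorem isCompact_rhoKN_zero (hε₀ : 0 ≤ ε₀) (hc : 0 ≤ c) (he : 0 ≤ e) :
    IsCompact {p : ℂ × ℂ | rhoKN ε₀ c e p = 0} := by
  set A := ε₀ * c
  have hA : 0 ≤ A := mul_nonneg hε₀ hc
  refine ((isCompact_closedBall 0 (1 + A)).prod
    (isCompact_closedBall 0 √(1 + A * (1 + A) ^ 8))).of_isClosed_subset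
    (isClosed_eq (continuous_rhoKN ε₀ c e) continuous_const) fun p hp => ?_
  have hbound : ‖p.2‖ ^ 2 + ‖p.1‖ ^ 10 ≤ 1 + A * ‖p.1‖ ^ 8 :=
    sq_add_pow_ten_le_of_rhoKN_eq_zero hε₀ hc he hp
  have hz : ‖p.1‖ ≤ 1 + A :=
    le_one_add_of_pow_ten_le hA (by nlinarith [sq_nonneg ‖p.2‖])
  have hz8 : ‖p.1‖ ^ 8 ≤ (1 + A) ^ 8 := pow_le_pow_left₀ (norm_nonneg _) hz 8
  refine ⟨mem_closedBall_zero_iff.mpr hz, mem_closedBall_zero_iff.mpr (Real.le_sqrt_of_sq_le ?_)⟩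
  nlinarith [mul_le_mul_of_nonneg_left hz8 hA, pow_nonneg (norm_nonneg p.1) 10]

lemma rhoKN_ofReal_one_pos (hε₀ : 0 ≤ ε₀) (hc : 0 ≤ c) (he : 0 ≤ e) {r : ℝ} (hr : 0 < r) :
    0 < rhoKN ε₀ c e (r, 1) := by
  have hre : ((r : ℂ) ^ 6).re = r ^ 6 := by norm_cast
  simp only [rhoKN, hre, Complex.norm_real, Real.norm_of_nonneg hr.le, norm_one]
  have : 0 ≤ ε₀ * (r ^ 8 + c * (r ^ 2 * r ^ 6)) := by positivity
  nlinarith [pow_pos hr 10, mul_nonneg he (sq_nonneg r)]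

lemma rhoKN_mul_one_nonpos {ω : ℂ} (hω : ω ^ 6 = -1) (hc : 2 ≤ c) {r : ℝ} (hr : 0 < r)
    (hrε₀ : 2 * r ^ 2 ≤ ε₀) (he : 2 * e ≤ ε₀ * r ^ 6) :
    rhoKN ε₀ c e (r * ω, 1) ≤ 0 := by
  have hω1 : ‖ω‖ = 1 :=
    (pow_eq_one_iff_of_nonneg (norm_nonneg ω) (by norm_num : 6 ≠ 0)).mp
      (by rw [← norm_pow, hω, norm_neg, norm_one])
  have hnorm : ‖(r : ℂ) * ω‖ = r := by simp [hω1, hr.le]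
  have hre : (((r : ℂ) * ω) ^ 6).re = -r ^ 6 := by
    rw [mul_pow, hω, mul_neg_one, Complex.neg_re]
    norm_cast
  simp only [rhoKN, hnorm, hre, norm_one]
  have h8 : 2 * r ^ 8 ≤ ε₀ * r ^ 6 := by
    nlinarith [mul_le_mul_of_nonneg_right hrε₀ (pow_nonneg hr.le 6)]
  have hc' : ε₀ * r ^ 6 ≤ ε₀ * (c - 1) * r ^ 6 := by
    have hε₀ : 0 ≤ ε₀ := by nlinarith [sq_nonneg r]
    nlinarith [mul_nonneg (mul_nonneg hε₀ (pow_nonneg hr.le 6)) (sub_nonneg.2 hc)]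
  nlinarith [mul_le_mul_of_nonneg_right (by linarith : r ^ 8 + e ≤ ε₀ * (c - 1) * r ^ 6)
    (sq_nonneg r)]

lemma exp_pi_div_six_mul_I_pow_six : Complex.exp (Real.pi / 6 * Complex.I) ^ 6 = -1 := by
  rw [← Complex.exp_nat_mul, ← Complex.exp_pi_mul_I]
  congr 1
  push_cast
  ring

lemma exists_norm_eq_rhoKN_eq_zero (hc : 2 ≤ c) (he : 0 ≤ e) {r : ℝ}
    (hr : 0 < r) (hrε₀ : 2 * r ^ 2 ≤ ε₀) (her : 2 * e ≤ ε₀ * r ^ 6) :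
    ∃ z : ℂ, ‖z‖ = r ∧ rhoKN ε₀ c e (z, 1) = 0 := by
  have hε₀ : 0 ≤ ε₀ := by nlinarith [sq_nonneg r]
  set ω := Complex.exp (Real.pi / 6 * Complex.I)
  have hω : ‖ω‖ = 1 := by simpa [ω] using Complex.norm_exp_ofReal_mul_I (Real.pi / 6)
  have hsphere := isConnected_sphere (Complex.rank_real_complex ▸ Nat.one_lt_ofNat) (0 : ℂ) hr.le
  obtain ⟨z, hz, hz0⟩ := hsphere.isPreconnected.intermediate_value
    (a := r * ω) (b := (r : ℂ)) (by simp [hω, hr.le]) (by simp [hr.le])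
    ((continuous_rhoKN ε₀ c e).comp (Continuous.prodMk_left 1)).continuousOn
    ⟨rhoKN_mul_one_nonpos exp_pi_div_six_mul_I_pow_six hc hr hrε₀ her,
      (rhoKN_ofReal_one_pos hε₀ (by linarith) he hr).le⟩
  exact ⟨z, mem_sphere_zero_iff_norm.mp hz, hz0⟩

theorem infinite_rhoKN_line (hc : 2 ≤ c) (he : 0 ≤ e) {a b : ℝ}
    (ha : 0 < a) (hab : a < b) (hbε₀ : 2 * b ^ 2 ≤ ε₀) (hea : 2 * e ≤ ε₀ * a ^ 6) :
    {z : ℂ | rhoKN ε₀ c e (z, 1) = 0}.Infinite := by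
  refine Set.Infinite.of_image (‖·‖) ((Set.Icc_infinite hab).mono fun r hr => ?_)
  obtain ⟨har, hrb⟩ := hr
  have hr : 0 < r := ha.trans_le har
  obtain ⟨z, hz, hz0⟩ := exists_norm_eq_rhoKN_eq_zero hc he hr
    (by nlinarith [pow_le_pow_left₀ hr.le hrb 2])
    (by nlinarith [pow_le_pow_left₀ ha.le har 6])
  exact ⟨z, hz0, hz⟩

end

theorem stmt10_general (ε₀ c : ℝ) (hε₀ : 0 < ε₀) (hc1 : 2 < c) :
    (∀ e : ℝ, 0 < e → e < 1 → IsCompact {p : ℂ × ℂ | rhoKN ε₀ c e p = 0}) ∧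
    ∃ te : ℝ, 0 < te ∧ ∀ e : ℝ, 0 < e → e ≤ te →
      {z : ℂ | rhoKN ε₀ c e (z, 1) = 0}.Infinite := by
  refine ⟨fun e he _ => isCompact_rhoKN_zero hε₀.le (by linarith) he.le, ?_⟩
  set b := √(ε₀ / 2)
  have hb : 0 < b := Real.sqrt_pos.mpr (by positivity)
  have hbε₀ : 2 * b ^ 2 = ε₀ := by rw [Real.sq_sqrt (by positivity)]; ring
  refine ⟨ε₀ * (b / 2) ^ 6 / 2, by positivity, fun e he hte => ?_⟩
  exact infinite_rhoKN_line (a := b / 2) (b := b) hc1.le he.le (by positivity)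
    (by linarith) hbε₀.le (by linarith)

/-- each `M_ε = {ρ_ε = 0}` (for `0 < ε < 1`) is compact, and for `ε̃`
sufficiently small and `0 < ε ≤ ε̃` the intersection `M_ε ∩ {w = 1}` is infinite. -/
theorem stmt10 (ε₀ c : ℝ) (hε₀ : 0 < ε₀) (hc1 : 2 < c) (hc2 : c < 16 / 7) :
    (∀ e : ℝ, 0 < e → e < 1 → IsCompact {p : ℂ × ℂ | rhoKN ε₀ c e p = 0}) ∧
    ∃ te : ℝ, 0 < te ∧ ∀ e : ℝ, 0 < e → e ≤ te →
      {z : ℂ | rhoKN ε₀ c e (z, 1) = 0}.Infinite :=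
  stmt10_general ε₀ c hε₀ hc1

end
end

section
/- Let $Q(\eta,\bar\eta) = -a(|\eta_1|^4 - |\eta_n|^4)$ on $\mathbb{C}^n$ with $a > 0$, $n \ge 4$, and $2 \le \ell \le n/2$. Write the $\ell$-harmonic decomposition $Q = N^{(2,2)} + A^{(1,1)}|\eta|_\ell^2$ with $\triangle_\ell N^{(2,2)} = 0$. Then for every $\eta$ on the null cone $\{|\eta|_\ell^2 = 0\}$ one has $N^{(2,2)}(\eta,\bar\eta) = Q(\eta,\bar\eta)$; moreover $N^{(2,2)}$ takes both a strictly negative value and a strictly positive value on the null cone, namely at $\eta = e_1 + e_{\ell+1}$ and at $\eta = e_2 + e_n$ respectively. -/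
open scoped BigOperators ComplexConjugate

noncomputable section

/-- nSq of an indicator of two distinct indices. -/
lemma nSq_pair {n ℓ : ℕ} (i k : ℕ) (hi : i < n) (hk : k < n) (hik : i ≠ k) :
    nSq n ℓ (fun j : Fin n => if (j : ℕ) = i ∨ (j : ℕ) = k then 1 else 0)
      = eps n ℓ ⟨i, hi⟩ + eps n ℓ ⟨k, hk⟩ := by
  unfold nSq
  have : ∀ j : Fin n,
      eps n ℓ j * (if (j : ℕ) = i ∨ (j : ℕ) = k then (1:ℂ) else 0)
        * conj (if (j : ℕ) = i ∨ (j : ℕ) = k then (1:ℂ) else 0)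
      = (if j = ⟨i, hi⟩ then eps n ℓ ⟨i, hi⟩ else 0)
        + (if j = ⟨k, hk⟩ then eps n ℓ ⟨k, hk⟩ else 0) := by
    intro j
    by_cases h1 : (j : ℕ) = i
    · have hj : j = ⟨i, hi⟩ := Fin.ext h1
      subst hj
      simp [hik]
    · by_cases h2 : (j : ℕ) = k
      · have hj : j = ⟨k, hk⟩ := Fin.ext h2
        subst hj
        simp [h1]
      · have hj1 : j ≠ ⟨i, hi⟩ := fun h => h1 (by simpa using congrArg Fin.val h)
        have hj2 : j ≠ ⟨k, hk⟩ := fun h => h2 (by simpa using congrArg Fin.val h)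
        simp [h1, h2, hj1, hj2]
  rw [Finset.sum_congr rfl (fun j _ => this j), Finset.sum_add_distrib,
    Finset.sum_ite_eq' Finset.univ, Finset.sum_ite_eq' Finset.univ]
  simp

/-- for `Q(η,η̄) = -a(|η₁|⁴ - |η_n|⁴)` with ℓ-harmonic decomposition
`Q = N⁽²'²⁾ + A⁽¹'¹⁾ |η|_ℓ²`, the harmonic part `N⁽²'²⁾` agrees with `Q` on the null
cone `{|η|_ℓ² = 0}` and takes a strictly negative value at `η = e₁ + e_{ℓ+1}` and a
strictly positive value at `η = e₂ + e_n`, both of which lie on the null cone. -/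
theorem stmt11 {n ℓ : ℕ} (hn : 4 ≤ n) (hl2 : 2 ≤ ℓ) (hl : 2 * ℓ ≤ n)
    (a : ℝ) (ha : 0 < a)
    (N : Fin n → Fin n → Fin n → Fin n → ℂ) (A : Fin n → Fin n → ℂ)
    (hNreal : ∀ α β γ δ, conj (N α β γ δ) = N β α δ γ)
    (hAreal : ∀ α β, conj (A α β) = A β α)
    (hharm : ∀ η : Fin n → ℂ, lapL ℓ (quartic N) η (fun j => conj (η j)) = 0)
    (hdec : ∀ η : Fin n → ℂ,
      -(a : ℂ) * ((η ⟨0, by omega⟩ * conj (η ⟨0, by omega⟩)) ^ 2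
          - (η ⟨n - 1, by omega⟩ * conj (η ⟨n - 1, by omega⟩)) ^ 2)
        = quartic N η (fun j => conj (η j)) + herm A η * nSq n ℓ η) :
    (∀ η : Fin n → ℂ, nSq n ℓ η = 0 →
      quartic N η (fun j => conj (η j))
        = -(a : ℂ) * ((η ⟨0, by omega⟩ * conj (η ⟨0, by omega⟩)) ^ 2
            - (η ⟨n - 1, by omega⟩ * conj (η ⟨n - 1, by omega⟩)) ^ 2)) ∧
    (quartic N (fun j => if (j : ℕ) = 0 ∨ (j : ℕ) = ℓ then 1 else 0)
        (fun j => conj ((fun j : Fin n => if (j : ℕ) = 0 ∨ (j : ℕ) = ℓ then (1 : ℂ) else 0) j))).re < 0 ∧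
    0 < (quartic N (fun j => if (j : ℕ) = 1 ∨ (j : ℕ) = n - 1 then 1 else 0)
        (fun j => conj ((fun j : Fin n => if (j : ℕ) = 1 ∨ (j : ℕ) = n - 1 then (1 : ℂ) else 0) j))).re := by
  have key : ∀ η : Fin n → ℂ, nSq n ℓ η = 0 →
      quartic N η (fun j => conj (η j))
        = -(a : ℂ) * ((η ⟨0, by omega⟩ * conj (η ⟨0, by omega⟩)) ^ 2
            - (η ⟨n - 1, by omega⟩ * conj (η ⟨n - 1, by omega⟩)) ^ 2) := by
    intro η hη
    have h := hdec η
    rw [hη, mul_zero, add_zero] at h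
    exact h.symm
  refine ⟨key, ?_, ?_⟩
  · have h0 : nSq n ℓ (fun j : Fin n => if (j : ℕ) = 0 ∨ (j : ℕ) = ℓ then 1 else 0) = 0 := by
      rw [nSq_pair 0 ℓ (by omega) (by omega) (by omega)]
      unfold eps
      simp only [Fin.val_mk]
      rw [if_pos (by omega : (0:ℕ) < ℓ), if_neg (by omega : ¬ (ℓ < ℓ))]
      ring
    have hv := key _ h0
    have hne : ¬ ((n - 1 : ℕ) = 0 ∨ (n - 1 : ℕ) = ℓ) := by omega
    simp only [Fin.val_mk, true_or, if_true, if_neg hne, map_one, map_zero, mul_one,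
      mul_zero, one_pow] at hv
    norm_num at hv
    show (quartic N (fun j : Fin n => if (j : ℕ) = 0 ∨ (j : ℕ) = ℓ then (1:ℂ) else 0)
        (fun j => conj (if (j : ℕ) = 0 ∨ (j : ℕ) = ℓ then (1:ℂ) else 0))).re < 0
    have hc : (fun j : Fin n => conj (if (j : ℕ) = 0 ∨ (j : ℕ) = ℓ then (1:ℂ) else 0))
        = fun j : Fin n => if (j : ℕ) = 0 ∨ (j : ℕ) = ℓ then (1:ℂ) else 0 := by
      funext j; split <;> simp
    rw [hc, hv]
    simpa using ha
  · have h0 : nSq n ℓ (fun j : Fin n => if (j : ℕ) = 1 ∨ (j : ℕ) = n - 1 then 1 else 0) = 0 := by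
      rw [nSq_pair 1 (n - 1) (by omega) (by omega) (by omega)]
      unfold eps
      simp only [Fin.val_mk]
      rw [if_pos (by omega : (1:ℕ) < ℓ), if_neg (by omega : ¬ (n - 1 < ℓ))]
      ring
    have hv := key _ h0
    have hne : ¬ ((0 : ℕ) = 1 ∨ (0 : ℕ) = n - 1) := by omega
    simp only [Fin.val_mk, or_true, if_true, if_neg hne, map_one, map_zero, mul_one,
      mul_zero, one_pow] at hv
    norm_num at hv
    show 0 < (quartic N (fun j : Fin n => if (j : ℕ) = 1 ∨ (j : ℕ) = n - 1 then (1:ℂ) else 0)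
        (fun j => conj (if (j : ℕ) = 1 ∨ (j : ℕ) = n - 1 then (1:ℂ) else 0))).re
    have hc : (fun j : Fin n => conj (if (j : ℕ) = 1 ∨ (j : ℕ) = n - 1 then (1:ℂ) else 0))
        = fun j : Fin n => if (j : ℕ) = 1 ∨ (j : ℕ) = n - 1 then (1:ℂ) else 0 := by
      funext j; split <;> simp
    rw [hc, hv]
    simpa using ha


end
end
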